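/- arXiv:2205.06132 — 10 statements merged into one kernel-verified Lean document; each statement's English description precedes it below -/
import Mathlib

section
/- The two definitions of core-stability for two-sided assignment markets with budget-constrained bidders are equivalent: an outcome (μ,p) has no blocking pair (i.e., no bidder-seller pair (i,j) with π_i(j,p) > π_i(μ(i),p) and p(j) < b^i) if and only if there exist no subsets B' ⊆ B of bidders and S' ⊆ S of goods together with an outcome (μ',p') on B' × S' such that π_i(μ'(i),p') > π_i(μ(i),p) for all i ∈ B' and p'(j) > p(j) for all j ∈ S'. -/
open scoped Classical

/-- Goods are indexed by `Fin (m+1)`; good `0` is the dummy good. -/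
abbrev Good (m : ℕ) : Type := Fin (m + 1)

/-- Utility `π_i(j,p)`: `v_i(j) - p(j)` if `p(j) ≤ b^i`, and `-∞` otherwise. -/
noncomputable def util {n m : ℕ} (v : Fin n → Good m → ℕ) (b : Fin n → ℕ)
    (p : Good m → ℝ) (i : Fin n) (j : Good m) : WithBot ℝ :=
  if p j ≤ (b i : ℝ) then (((v i j : ℝ) - p j : ℝ) : WithBot ℝ) else ⊥

/-- An assignment: each non-dummy good is assigned to at most one bidder. -/
def IsAssignment {n m : ℕ} (μ : Fin n → Good m) : Prop :=
  ∀ j : Good m, j ≠ 0 → ∀ i i' : Fin n, μ i = j → μ i' = j → i = i'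

/-- A price vector: nonnegative prices with `p(0) = 0`. -/
def IsPriceVec {m : ℕ} (p : Good m → ℝ) : Prop :=
  p 0 = 0 ∧ ∀ j, 0 ≤ p j

/-- An outcome: an assignment together with a price vector such that no budget is
violated and every positively priced good is assigned to exactly one bidder. -/
def IsOutcome {n m : ℕ} (b : Fin n → ℕ) (μ : Fin n → Good m) (p : Good m → ℝ) : Prop :=
  IsAssignment μ ∧ IsPriceVec p ∧ (∀ i, p (μ i) ≤ (b i : ℝ)) ∧
    ∀ j : Good m, 0 < p j → ∃! i, μ i = j

/-- A blocking pair `(i,j)`: `π_i(j,p) > π_i(μ(i),p)` and `p(j) < b^i`. -/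
def IsBlockingPair {n m : ℕ} (v : Fin n → Good m → ℕ) (b : Fin n → ℕ)
    (μ : Fin n → Good m) (p : Good m → ℝ) (i : Fin n) (j : Good m) : Prop :=
  util v b p i (μ i) < util v b p i j ∧ p j < (b i : ℝ)

/-- A core outcome: an outcome with no blocking pairs. -/
def IsCore {n m : ℕ} (v : Fin n → Good m → ℕ) (b : Fin n → ℕ)
    (μ : Fin n → Good m) (p : Good m → ℝ) : Prop :=
  IsOutcome b μ p ∧ ∀ i j, ¬ IsBlockingPair v b μ p i j

/-- An outcome `(μ,p)` has no blocking pair if and only if there is no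
blocking coalition: no subsets `B' ⊆ B`, `S' ⊆ S` together with an outcome `(μ',p')` on
`B' × S'` such that every bidder in `B'` is strictly better off and every seller in `S'`
receives a strictly higher price. -/
theorem core_iff_no_blocking_coalition {n m : ℕ}
    (v : Fin n → Good m → ℕ) (b : Fin n → ℕ)
    (hv0 : ∀ i, v i 0 = 0) (hb : ∀ i, 0 < b i)
    (μ : Fin n → Good m) (p : Good m → ℝ)
    (hout : IsOutcome b μ p) :
    (∀ i j, ¬ IsBlockingPair v b μ p i j) ↔
      ¬ ∃ (B' : Set (Fin n)) (S' : Set (Good m))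
          (μ' : Fin n → Good m) (p' : Good m → ℝ),
        B'.Nonempty ∧
        (∀ i ∈ B', μ' i ∈ S') ∧
        (∀ j ∈ S', j ≠ 0 → ∀ i ∈ B', ∀ i' ∈ B', μ' i = j → μ' i' = j → i = i') ∧
        (∀ j ∈ S', 0 ≤ p' j) ∧
        (∀ i ∈ B', p' (μ' i) ≤ (b i : ℝ)) ∧
        (∀ j ∈ S', 0 < p' j → ∃ i ∈ B', μ' i = j) ∧
        (∀ i ∈ B', util v b p i (μ i) < util v b p' i (μ' i)) ∧
        (∀ j ∈ S', p j < p' j) := by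
  obtain ⟨hass, ⟨hp0, hpnn⟩, hbudg, hpos⟩ := hout
  constructor
  · rintro hnb ⟨B', S', μ', p', ⟨i, hiB⟩, hμ'S, _, _, hbud, _, hutil, hpS⟩
    have hjS := hμ'S i hiB
    have hpj : p (μ' i) < p' (μ' i) := hpS _ hjS
    have hp'b : p' (μ' i) ≤ (b i : ℝ) := hbud i hiB
    have hpb : p (μ' i) < (b i : ℝ) := lt_of_lt_of_le hpj hp'b
    have hu : util v b p i (μ i) < util v b p' i (μ' i) := hutil i hiB
    have hlt : util v b p' i (μ' i) < util v b p i (μ' i) := by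
      unfold util
      rw [if_pos hp'b, if_pos hpb.le]
      exact_mod_cast sub_lt_sub_left hpj _
    exact hnb i (μ' i) ⟨lt_trans hu hlt, hpb⟩
  · intro hnc i j hblk
    obtain ⟨hlt, hpb⟩ := hblk
    have hmb : p (μ i) ≤ (b i : ℝ) := hbudg i
    have hur : ((v i (μ i) : ℝ) - p (μ i)) < ((v i j : ℝ) - p j) := by
      have := hlt
      unfold util at this
      rw [if_pos hmb, if_pos hpb.le] at this
      exact_mod_cast this
    set u : ℝ := (v i (μ i) : ℝ) - p (μ i) with hu
    set g : ℝ := (v i j : ℝ) - p j - u with hg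
    have hg0 : 0 < g := by simp only [hg]; linarith
    set ε : ℝ := min ((b i : ℝ) - p j) g / 2 with hε
    have hε0 : 0 < ε := by
      have h1 : 0 < (b i : ℝ) - p j := by linarith
      have := lt_min h1 hg0
      positivity
    have hε1 : ε ≤ ((b i : ℝ) - p j) / 2 := by
      have := min_le_left ((b i : ℝ) - p j) g
      linarith
    have hε2 : ε ≤ g / 2 := by
      have := min_le_right ((b i : ℝ) - p j) g
      linarith
    have hbi0 : (0:ℝ) ≤ (b i : ℝ) - p j := le_of_lt (by linarith)
    have hp'b : p j + ε ≤ (b i : ℝ) := by linarith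
    apply hnc
    refine ⟨{i}, {j}, fun _ => j, fun _ => p j + ε, ⟨i, rfl⟩, ?_, ?_, ?_, ?_, ?_, ?_, ?_⟩
    · intro _ _; rfl
    · rintro _ _ _ a rfl a' rfl _ _; rfl
    · intro k hk
      have := hpnn j
      show (0:ℝ) ≤ p j + ε
      linarith
    · intro k hk
      show p j + ε ≤ (b k : ℝ)
      simp only [Set.mem_singleton_iff] at hk
      rw [hk]
      exact hp'b
    · intro k hk _
      simp only [Set.mem_singleton_iff] at hk
      exact ⟨i, rfl, hk.symm⟩
    · intro k hk
      simp only [Set.mem_singleton_iff] at hk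
      subst hk
      show util v b p k (μ k) < util v b (fun _ => p j + ε) k j
      unfold util
      simp only []
      rw [if_pos (hbudg k), if_pos hp'b]
      have : u < (v k j : ℝ) - (p j + ε) := by
        simp only [hg] at hε2
        linarith
      exact_mod_cast this
    · intro k hk
      simp only [Set.mem_singleton_iff] at hk
      rw [hk]
      show p j < p j + ε
      linarith
end

section
/- Suppose budgets are non-binding, i.e., b^i > v_i(j) for all bidders i and all goods j. Then an outcome (μ,p) is a core outcome if and only if it is a competitive equilibrium. -/
open scoped Classical

/-- The demand set of bidder `i` at prices `p`: all affordable goods maximizing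
utility among all affordable goods. -/
def Demand {n m : ℕ} (v : Fin n → Good m → ℕ) (b : Fin n → ℕ)
    (p : Good m → ℝ) (i : Fin n) : Set (Good m) :=
  {j | p j ≤ (b i : ℝ) ∧ ∀ k, p k ≤ (b i : ℝ) → util v b p i k ≤ util v b p i j}

/-- A competitive equilibrium: an outcome in which every bidder receives a good
in their demand set. -/
def IsCompetitiveEq {n m : ℕ} (v : Fin n → Good m → ℕ) (b : Fin n → ℕ)
    (μ : Fin n → Good m) (p : Good m → ℝ) : Prop :=
  IsOutcome b μ p ∧ ∀ i, μ i ∈ Demand v b p i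

/-- If budgets are non-binding (`b^i > v_i(j)` for all `i`, `j`),
then an outcome `(μ,p)` is a core outcome if and only if it is a competitive
equilibrium. -/
theorem core_iff_competitiveEq_of_nonbinding {n m : ℕ}
    (v : Fin n → Good m → ℕ) (b : Fin n → ℕ)
    (hv0 : ∀ i, v i 0 = 0) (hb : ∀ i, 0 < b i)
    (hnb : ∀ i j, v i j < b i)
    (μ : Fin n → Good m) (p : Good m → ℝ)
    (hout : IsOutcome b μ p) :
    IsCore v b μ p ↔ IsCompetitiveEq v b μ p := by
  obtain ⟨hass, ⟨hp0, hpnn⟩, hbud, hpos⟩ := hout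
  constructor
  · rintro ⟨ho, hblock⟩
    refine ⟨ho, fun i => ⟨hbud i, fun k hk => ?_⟩⟩
    by_contra hlt
    push_neg at hlt
    rcases lt_or_eq_of_le hk with hk' | hk'
    · exact hblock i k ⟨hlt, hk'⟩
    · -- p k = b i, so util k = v i k - b i < 0 ≤ util at 0; (i,0) blocks
      have hutil0 : util v b p i 0 = ((0 : ℝ) : WithBot ℝ) := by
        simp [util, hp0, hv0 i, (hb i).le, Nat.cast_nonneg]
      have hutilk : util v b p i k = (((v i k : ℝ) - p k : ℝ) : WithBot ℝ) := by
        simp [util, hk]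
      have hk0 : util v b p i k < util v b p i 0 := by
        rw [hutil0, hutilk, WithBot.coe_lt_coe]
        have := hnb i k
        have : (v i k : ℝ) < (b i : ℝ) := by exact_mod_cast this
        linarith [hk'.symm ▸ this]
      exact hblock i 0 ⟨hlt.trans hk0, by
        rw [hp0]; exact_mod_cast hb i⟩
  · rintro ⟨ho, hdem⟩
    refine ⟨ho, fun i j hbl => ?_⟩
    exact absurd hbl.1 (not_lt.2 ((hdem i).2 j hbl.2.le))
end

section
/- Let prices p and sets R_1,…,R_n ⊆ S be given, let O ⊆ S be a minimally overdemanded set with respect to the restricted demand sets D_i(p,R_i), and let T ⊆ O with T ≠ ∅. Then |{ i ∈ B : D_i(p,R_i) ⊆ O and D_i(p,R_i) ∩ T ≠ ∅ }| > |T|. In particular, T is not underdemanded. -/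
open scoped Classical

/-- The restricted demand set `D_i(p,R)`: all affordable goods in `R` maximizing
utility among all affordable goods in `R`. -/
def RDemand {n m : ℕ} (v : Fin n → Good m → ℕ) (b : Fin n → ℕ)
    (p : Good m → ℝ) (i : Fin n) (R : Set (Good m)) : Set (Good m) :=
  {j | j ∈ R ∧ p j ≤ (b i : ℝ) ∧
    ∀ k ∈ R, p k ≤ (b i : ℝ) → util v b p i k ≤ util v b p i j}

/-- `T` is overdemanded: `0 ∉ T` and more than `|T|` bidders demand only goods in `T`. -/
def Overdemanded {n m : ℕ} (v : Fin n → Good m → ℕ) (b : Fin n → ℕ)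
    (p : Good m → ℝ) (R : Fin n → Set (Good m)) (T : Set (Good m)) : Prop :=
  (0 : Good m) ∉ T ∧
    T.ncard < {i : Fin n | RDemand v b p i (R i) ⊆ T}.ncard

/-- `T` is underdemanded: all goods in `T` have positive price and fewer than `|T|`
bidders demand some good in `T`. -/
def Underdemanded {n m : ℕ} (v : Fin n → Good m → ℕ) (b : Fin n → ℕ)
    (p : Good m → ℝ) (R : Fin n → Set (Good m)) (T : Set (Good m)) : Prop :=
  (∀ j ∈ T, 0 < p j) ∧
    {i : Fin n | (RDemand v b p i (R i) ∩ T).Nonempty}.ncard < T.ncard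

/-- `O` is minimally overdemanded: overdemanded with no proper overdemanded subset. -/
def MinimallyOverdemanded {n m : ℕ} (v : Fin n → Good m → ℕ) (b : Fin n → ℕ)
    (p : Good m → ℝ) (R : Fin n → Set (Good m)) (O : Set (Good m)) : Prop :=
  Overdemanded v b p R O ∧ ∀ T ⊆ O, T ≠ O → ¬ Overdemanded v b p R T

/-- If `O` is minimally overdemanded and `∅ ≠ T ⊆ O`, then more than
`|T|` bidders demand only goods in `O` and some good in `T`; in particular, `T` is not
underdemanded. -/
theorem minimally_overdemanded_subset {n m : ℕ}
    (v : Fin n → Good m → ℕ) (b : Fin n → ℕ)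
    (hv0 : ∀ i, v i 0 = 0) (hb : ∀ i, 0 < b i)
    (p : Good m → ℝ) (hp : IsPriceVec p)
    (R : Fin n → Set (Good m)) (hR : ∀ i, (R i).Nonempty)
    (O T : Set (Good m))
    (hO : MinimallyOverdemanded v b p R O)
    (hTO : T ⊆ O) (hT : T.Nonempty) :
    T.ncard < {i : Fin n | RDemand v b p i (R i) ⊆ O ∧
                  (RDemand v b p i (R i) ∩ T).Nonempty}.ncard ∧
      ¬ Underdemanded v b p R T := by
  classical
  have hOfin : O.Finite := Set.toFinite O
  have hOT : O \ T ≠ O := by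
    obtain ⟨x, hx⟩ := hT
    intro h
    have hx' : x ∈ O \ T := by rw [h]; exact hTO hx
    exact hx'.2 hx
  have hnot := hO.2 (O \ T) Set.diff_subset hOT
  have h0 : (0 : Good m) ∉ O := hO.1.1
  have hcount2 : {i : Fin n | RDemand v b p i (R i) ⊆ O \ T}.ncard ≤ (O \ T).ncard := by
    by_contra h
    push_neg at h
    exact hnot ⟨fun h0' => h0 h0'.1, h⟩
  have hcount : O.ncard < {i : Fin n | RDemand v b p i (R i) ⊆ O}.ncard := hO.1.2
  have hpart : {i : Fin n | RDemand v b p i (R i) ⊆ O ∧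
        (RDemand v b p i (R i) ∩ T).Nonempty} =
      {i : Fin n | RDemand v b p i (R i) ⊆ O} \
        {i : Fin n | RDemand v b p i (R i) ⊆ O \ T} := by
    ext i
    simp only [Set.mem_setOf_eq, Set.mem_diff]
    constructor
    · rintro ⟨h1, x, hx⟩
      exact ⟨h1, fun h2 => (h2 hx.1).2 hx.2⟩
    · rintro ⟨h1, h2⟩
      refine ⟨h1, ?_⟩
      by_contra hne
      rw [Set.not_nonempty_iff_eq_empty] at hne
      apply h2
      intro x hx
      refine ⟨h1 hx, fun hxT => ?_⟩
      exact Set.eq_empty_iff_forall_notMem.mp hne x ⟨hx, hxT⟩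
  have hsub : {i : Fin n | RDemand v b p i (R i) ⊆ O \ T} ⊆
      {i : Fin n | RDemand v b p i (R i) ⊆ O} := fun i hi =>
    hi.trans Set.diff_subset
  have hdiff := Set.ncard_diff hsub
  have hOTcard : (O \ T).ncard = O.ncard - T.ncard := Set.ncard_diff hTO
  have hTle : T.ncard ≤ O.ncard := Set.ncard_le_ncard hTO hOfin
  have hmain : T.ncard < {i : Fin n | RDemand v b p i (R i) ⊆ O ∧
      (RDemand v b p i (R i) ∩ T).Nonempty}.ncard := by
    rw [hpart, hdiff]
    omega
  refine ⟨hmain, ?_⟩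
  intro hU
  obtain ⟨-, hlt⟩ := hU
  have hsub2 : {i : Fin n | RDemand v b p i (R i) ⊆ O ∧
      (RDemand v b p i (R i) ∩ T).Nonempty} ⊆
      {i : Fin n | (RDemand v b p i (R i) ∩ T).Nonempty} := fun i hi => hi.2
  have := Set.ncard_le_ncard hsub2 (Set.toFinite _)
  omega
end

section
/- Let (ν,q) be an arbitrary outcome, let R_1,…,R_n ⊆ S, and let O ⊆ S be a minimally overdemanded set with respect to the restricted demand sets D_i(q,R_i). Let J be a nonempty proper subset of O. Then there exists a bidder i* with D_{i*}(q,R_{i*}) ⊆ O, D_{i*}(q,R_{i*}) ∩ J ≠ ∅, and ν(i*) ∉ J. -/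
open scoped Classical

/-- Let `(ν,q)` be an outcome and `O` a minimally overdemanded set with
respect to the restricted demand sets `D_i(q,R_i)`. For every nonempty proper subset
`J ⊊ O`, there is a bidder `i*` with `D_{i*}(q,R_{i*}) ⊆ O`, `D_{i*}(q,R_{i*}) ∩ J ≠ ∅`
and `ν(i*) ∉ J`. -/
theorem exists_bidder_demand_meets_not_assigned {n m : ℕ}
    (v : Fin n → Good m → ℕ) (b : Fin n → ℕ)
    (hv0 : ∀ i, v i 0 = 0) (hb : ∀ i, 0 < b i)
    (ν : Fin n → Good m) (q : Good m → ℝ)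
    (hout : IsOutcome b ν q)
    (R : Fin n → Set (Good m)) (hR : ∀ i, (R i).Nonempty)
    (O : Set (Good m)) (hO : MinimallyOverdemanded v b q R O)
    (J : Set (Good m)) (hJ : J.Nonempty) (hJO : J ⊆ O) (hJne : J ≠ O) :
    ∃ i : Fin n, RDemand v b q i (R i) ⊆ O ∧
      (RDemand v b q i (R i) ∩ J).Nonempty ∧ ν i ∉ J := by
  obtain ⟨⟨hO0, hOcard⟩, hmin⟩ := hO
  set A : Set (Fin n) := {i | RDemand v b q i (R i) ⊆ O} with hA
  set B : Set (Fin n) := {i | RDemand v b q i (R i) ⊆ O \ J} with hB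
  set C : Set (Fin n) := {i | RDemand v b q i (R i) ⊆ O ∧
      (RDemand v b q i (R i) ∩ J).Nonempty} with hC
  set G : Set (Fin n) := {i | ν i ∈ J} with hG
  -- O \ J is not overdemanded
  have hdiff_sub : O \ J ⊆ O := Set.diff_subset
  have hdiff_ne : O \ J ≠ O := by
    obtain ⟨j0, hj0⟩ := hJ
    intro h
    have : j0 ∈ O \ J := by rw [h]; exact hJO hj0
    exact this.2 hj0
  have hnod := hmin (O \ J) hdiff_sub hdiff_ne
  have h0diff : (0 : Good m) ∉ O \ J := fun h => hO0 h.1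
  have hBcard : B.ncard ≤ (O \ J).ncard := by
    by_contra h
    exact hnod ⟨h0diff, not_le.mp h⟩
  -- |O \ J| = |O| - |J|
  have hdiffcard : (O \ J).ncard = O.ncard - J.ncard := Set.ncard_diff hJO J.toFinite
  have hJleO : J.ncard ≤ O.ncard := Set.ncard_le_ncard hJO O.toFinite
  -- A ⊆ B ∪ C
  have hABC : A ⊆ B ∪ C := by
    intro i hi
    by_cases hne : (RDemand v b q i (R i) ∩ J).Nonempty
    · exact Or.inr ⟨hi, hne⟩
    · left
      intro j hj
      refine ⟨hi hj, fun hjJ => ?_⟩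
      exact hne ⟨j, hj, hjJ⟩
  have hAcard : A.ncard ≤ B.ncard + C.ncard :=
    le_trans (Set.ncard_le_ncard hABC (B ∪ C).toFinite) (Set.ncard_union_le B C)
  -- |G| ≤ |J| : ν injective on G (goods in J are nonzero)
  have hGinj : Set.InjOn ν G := by
    intro i hi i' hi' hii
    have hνJ : ν i ∈ J := hi
    have hne0 : ν i ≠ 0 := fun h => hO0 (h ▸ hJO hνJ)
    exact hout.1 (ν i) hne0 i i' rfl hii.symm
  have hGcard : G.ncard ≤ J.ncard := by
    have h1 : (ν '' G).ncard = G.ncard := Set.ncard_image_of_injOn hGinj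
    have h2 : ν '' G ⊆ J := by rintro _ ⟨i, hi, rfl⟩; exact hi
    exact h1 ▸ Set.ncard_le_ncard h2 J.toFinite
  -- conclude |C| > |G|
  have hCG : G.ncard < C.ncard := by
    have := hOcard
    omega
  -- so there is i ∈ C \ G
  have : ∃ i, i ∈ C ∧ i ∉ G := by
    by_contra h
    push_neg at h
    have hCsub : C ⊆ G := h
    exact absurd (Set.ncard_le_ncard hCsub G.toFinite) (not_le.mpr hCG)
  obtain ⟨i, ⟨h1, h2⟩, h3⟩ := this
  exact ⟨i, h1, h2, h3⟩
end

section
/- Let prices p and nonempty sets R_1,…,R_n ⊆ S be given. Suppose that with respect to the restricted demand sets D_i(p,R_i), there is no overdemanded set and no underdemanded set of goods. Then there exists an assignment μ : B → S such that μ(i) ∈ D_i(p,R_i) for every bidder i, and for every good j ∈ S with p(j) > 0 there is some bidder i with μ(i) = j. -/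
open scoped Classical

section HallAux

variable {n m : ℕ}

/-- The demand set as a finset. -/
noncomputable def Dset (v : Fin n → Good m → ℕ) (b : Fin n → ℕ) (p : Good m → ℝ)
    (R : Fin n → Set (Good m)) (i : Fin n) : Finset (Good m) :=
  Finset.univ.filter (fun j => j ∈ RDemand v b p i (R i))

lemma mem_Dset {v : Fin n → Good m → ℕ} {b : Fin n → ℕ} {p : Good m → ℝ}
    {R : Fin n → Set (Good m)} {i : Fin n} {j : Good m} :
    j ∈ Dset v b p R i ↔ j ∈ RDemand v b p i (R i) := by
  simp [Dset]

/-- Neighborhoods for the auxiliary bipartite graph.  Left vertices: bidders and one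
dummy per right "real" vertex.  Right vertices: real goods, per-bidder zero slots,
and `n` pad vertices. -/
noncomputable def Nbhd (v : Fin n → Good m → ℕ) (b : Fin n → ℕ) (p : Good m → ℝ)
    (R : Fin n → Set (Good m)) :
    (Fin n ⊕ (Good m ⊕ Fin n)) → Finset ((Good m ⊕ Fin n) ⊕ Fin n) :=
  Sum.elim
    (fun i =>
      ((Dset v b p R i).filter (fun j => j ≠ 0)).image (fun j => Sum.inl (Sum.inl j)) ∪
        (if (0 : Good m) ∈ Dset v b p R i then {Sum.inl (Sum.inr i)} else ∅))
    (fun y =>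
      (if (∃ j, y = Sum.inl j ∧ 0 < p j) then ∅ else {Sum.inl y}) ∪
        Finset.univ.image Sum.inr)

end HallAux

/-- If, with respect to the restricted demand sets `D_i(p,R_i)`, there is
no overdemanded and no underdemanded set of goods, then there is an assignment `μ` with
`μ(i) ∈ D_i(p,R_i)` for every bidder `i`, in which every positively priced good is
assigned to some bidder. -/
theorem exists_assignment_of_no_over_under {n m : ℕ}
    (v : Fin n → Good m → ℕ) (b : Fin n → ℕ)
    (hv0 : ∀ i, v i 0 = 0) (hb : ∀ i, 0 < b i)
    (p : Good m → ℝ) (hp : IsPriceVec p)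
    (R : Fin n → Set (Good m)) (hR : ∀ i, (R i).Nonempty)
    (hover : ∀ T : Set (Good m), ¬ Overdemanded v b p R T)
    (hunder : ∀ T : Set (Good m), ¬ Underdemanded v b p R T) :
    ∃ μ : Fin n → Good m, IsAssignment μ ∧
      (∀ i, μ i ∈ RDemand v b p i (R i)) ∧
      ∀ j : Good m, 0 < p j → ∃ i, μ i = j := by
  classical
  set N := Nbhd v b p R with hN
  -- Hall's condition for the auxiliary bipartite graph
  have hall : ∀ s : Finset (Fin n ⊕ (Good m ⊕ Fin n)), s.card ≤ (s.biUnion N).card := by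
    intro s
    set sB : Finset (Fin n) := Finset.univ.filter (fun i => Sum.inl i ∈ s) with hsBdef
    set sD : Finset (Good m ⊕ Fin n) := Finset.univ.filter (fun y => Sum.inr y ∈ s) with hsDdef
    have hmemB : ∀ i : Fin n, i ∈ sB ↔ Sum.inl i ∈ s := by intro i; simp [hsBdef]
    have hmemDd : ∀ y, y ∈ sD ↔ Sum.inr y ∈ s := by intro y; simp [hsDdef]
    have hsplit : s = sB.image Sum.inl ∪ sD.image Sum.inr := by
      ext l
      cases l with
      | inl i => simp [hmemB]
      | inr y => simp [hmemDd]
    have hscard : s.card = sB.card + sD.card := by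
      rw [hsplit, Finset.card_union_of_disjoint, Finset.card_image_of_injective _ Sum.inl_injective,
        Finset.card_image_of_injective _ Sum.inr_injective]
      simp [Finset.disjoint_left]
    by_cases hsD0 : sD = ∅
    · -- only bidders: use no-overdemand
      rw [hscard, hsD0, Finset.card_empty, add_zero]
      set I0 := sB.filter (fun i => ¬ (0:Good m) ∈ Dset v b p R i) with hI0
      set I1 := sB.filter (fun i => (0:Good m) ∈ Dset v b p R i) with hI1
      set T0 := I0.biUnion (Dset v b p R) with hT0
      have hT0ne : ∀ j ∈ T0, j ≠ (0:Good m) := by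
        intro j hj
        obtain ⟨i, hi, hji⟩ := Finset.mem_biUnion.1 hj
        intro h
        exact (Finset.mem_filter.1 hi).2 (h ▸ hji)
      have hIT : I0.card ≤ T0.card := by
        have h1 : (↑I0 : Set (Fin n)) ⊆ {i | RDemand v b p i (R i) ⊆ (↑T0 : Set (Good m))} := by
          intro i hi j hj
          exact Finset.mem_coe.2 (Finset.mem_biUnion.2 ⟨i, Finset.mem_coe.1 hi, mem_Dset.2 hj⟩)
        have h2 := hover ↑T0
        rw [Overdemanded] at h2
        push_neg at h2
        have h0T0 : (0 : Good m) ∉ (↑T0 : Set (Good m)) := by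
          intro h
          exact hT0ne 0 (Finset.mem_coe.1 h) rfl
        have h3 := h2 h0T0
        calc I0.card = (↑I0 : Set (Fin n)).ncard := (Set.ncard_coe_finset _).symm
          _ ≤ {i | RDemand v b p i (R i) ⊆ (↑T0 : Set (Good m))}.ncard :=
              Set.ncard_le_ncard h1 (Set.toFinite _)
          _ ≤ (↑T0 : Set (Good m)).ncard := h3
          _ = T0.card := Set.ncard_coe_finset _
      have hsub : (T0.image (fun j => (Sum.inl (Sum.inl j) : (Good m ⊕ Fin n) ⊕ Fin n))) ∪
          I1.image (fun i => (Sum.inl (Sum.inr i) : (Good m ⊕ Fin n) ⊕ Fin n)) ⊆ s.biUnion N := by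
        intro r hr
        rcases Finset.mem_union.1 hr with h | h
        · obtain ⟨j, hj, rfl⟩ := Finset.mem_image.1 h
          obtain ⟨i, hi0, hji⟩ := Finset.mem_biUnion.1 hj
          have hiB : i ∈ sB := (Finset.mem_filter.1 hi0).1
          refine Finset.mem_biUnion.2 ⟨Sum.inl i, (hmemB i).1 hiB, ?_⟩
          rw [hN]
          simp only [Nbhd, Sum.elim_inl]
          refine Finset.mem_union_left _ (Finset.mem_image.2 ⟨j, ?_, rfl⟩)
          exact Finset.mem_filter.2 ⟨hji, hT0ne j hj⟩
        · obtain ⟨i, hi1, rfl⟩ := Finset.mem_image.1 h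
          have hiB : i ∈ sB := (Finset.mem_filter.1 hi1).1
          have h0 : (0:Good m) ∈ Dset v b p R i := (Finset.mem_filter.1 hi1).2
          refine Finset.mem_biUnion.2 ⟨Sum.inl i, (hmemB i).1 hiB, ?_⟩
          rw [hN]
          simp only [Nbhd, Sum.elim_inl]
          refine Finset.mem_union_right _ ?_
          rw [if_pos h0]
          exact Finset.mem_singleton_self _
      have hdisj : Disjoint
          (T0.image (fun j => (Sum.inl (Sum.inl j) : (Good m ⊕ Fin n) ⊕ Fin n)))
          (I1.image (fun i => (Sum.inl (Sum.inr i) : (Good m ⊕ Fin n) ⊕ Fin n))) := by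
        simp [Finset.disjoint_left]
      have hIsplit : I1.card + I0.card = sB.card :=
        Finset.card_filter_add_card_filter_not (s := sB)
          (p := fun i => (0:Good m) ∈ Dset v b p R i)
      calc sB.card = I0.card + I1.card := by omega
        _ ≤ T0.card + I1.card := by omega
        _ = (T0.image (fun j => (Sum.inl (Sum.inl j) : (Good m ⊕ Fin n) ⊕ Fin n))).card +
            (I1.image (fun i => (Sum.inl (Sum.inr i) : (Good m ⊕ Fin n) ⊕ Fin n))).card := by
            rw [Finset.card_image_of_injective _ (fun a b h => by simpa using h : Function.Injective (fun j : Good m => (Sum.inl (Sum.inl j) : (Good m ⊕ Fin n) ⊕ Fin n))),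
              Finset.card_image_of_injective _ (fun a b h => by simpa using h : Function.Injective (fun i : Fin n => (Sum.inl (Sum.inr i) : (Good m ⊕ Fin n) ⊕ Fin n)))]
        _ = ((T0.image (fun j => (Sum.inl (Sum.inl j) : (Good m ⊕ Fin n) ⊕ Fin n))) ∪
            I1.image (fun i => (Sum.inl (Sum.inr i) : (Good m ⊕ Fin n) ⊕ Fin n))).card :=
            (Finset.card_union_of_disjoint hdisj).symm
        _ ≤ (s.biUnion N).card := Finset.card_le_card hsub
    · -- some dummy present: use no-underdemand
      obtain ⟨y0, hy0⟩ := Finset.nonempty_iff_ne_empty.2 hsD0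
      set F : Finset ((Good m ⊕ Fin n) ⊕ Fin n) := Finset.univ.image Sum.inr with hF
      set sDP := sD.filter (fun y => ∃ j, y = Sum.inl j ∧ 0 < p j) with hsDP
      set sDN := sD.filter (fun y => ¬ ∃ j, y = Sum.inl j ∧ 0 < p j) with hsDN
      set Ad := sDN.image (fun y => (Sum.inl y : (Good m ⊕ Fin n) ⊕ Fin n)) with hAd
      set PB := sB.biUnion (fun i => (Dset v b p R i).filter (fun j => 0 < p j)) with hPBdef
      set PBim := PB.image (fun j => (Sum.inl (Sum.inl j) : (Good m ⊕ Fin n) ⊕ Fin n)) with hPBim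
      set Pg := Finset.univ.filter (fun j : Good m => 0 < p j) with hPg
      set Tg := Pg \ (sB.biUnion (Dset v b p R)) with hTg
      set W := Finset.univ.filter
        (fun i => (RDemand v b p i (R i) ∩ (↑Tg : Set (Good m))).Nonempty) with hW
      -- no-underdemand: Tg.card ≤ W.card
      have hTgW : Tg.card ≤ W.card := by
        have h2 := hunder ↑Tg
        rw [Underdemanded] at h2
        push_neg at h2
        have hpos : ∀ j ∈ (↑Tg : Set (Good m)), 0 < p j := by
          intro j hj
          have := (Finset.mem_sdiff.1 (Finset.mem_coe.1 hj)).1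
          exact (Finset.mem_filter.1 this).2
        have h3 := h2 hpos
        have hWeq : {i : Fin n | (RDemand v b p i (R i) ∩ (↑Tg : Set (Good m))).Nonempty}
            = (↑W : Set (Fin n)) := by
          ext i; simp [hW]
        calc Tg.card = (↑Tg : Set (Good m)).ncard := (Set.ncard_coe_finset _).symm
          _ ≤ {i : Fin n | (RDemand v b p i (R i) ∩ (↑Tg : Set (Good m))).Nonempty}.ncard := h3
          _ = (↑W : Set (Fin n)).ncard := by rw [hWeq]
          _ = W.card := Set.ncard_coe_finset _
      have hWB : Disjoint sB W := by
        rw [Finset.disjoint_right]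
        intro i hiW hiB
        obtain ⟨j, hj1, hj2⟩ := (Finset.mem_filter.1 hiW).2
        have hjmem : j ∈ sB.biUnion (Dset v b p R) :=
          Finset.mem_biUnion.2 ⟨i, hiB, mem_Dset.2 hj1⟩
        exact (Finset.mem_sdiff.1 (Finset.mem_coe.1 hj2)).2 hjmem
      have hnb : sB.card + Tg.card ≤ n := by
        calc sB.card + Tg.card ≤ sB.card + W.card := by omega
          _ = (sB ∪ W).card := (Finset.card_union_of_disjoint hWB).symm
          _ ≤ (Finset.univ : Finset (Fin n)).card := Finset.card_le_univ _
          _ = n := by simp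
      -- Pg ⊆ PB ∪ Tg
      have hPgsub : Pg ⊆ PB ∪ Tg := by
        intro j hj
        by_cases hjB : j ∈ sB.biUnion (Dset v b p R)
        · obtain ⟨i, hiB, hji⟩ := Finset.mem_biUnion.1 hjB
          refine Finset.mem_union_left _ (Finset.mem_biUnion.2 ⟨i, hiB, ?_⟩)
          exact Finset.mem_filter.2 ⟨hji, (Finset.mem_filter.1 hj).2⟩
        · exact Finset.mem_union_right _ (Finset.mem_sdiff.2 ⟨hj, hjB⟩)
      have hPgcard : Pg.card ≤ PB.card + Tg.card :=
        le_trans (Finset.card_le_card hPgsub) (Finset.card_union_le _ _)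
      -- sDP.card ≤ Pg.card
      have hsDPcard : sDP.card ≤ Pg.card := by
        apply Finset.card_le_card_of_injOn (fun y => Sum.elim id (fun _ => (0:Good m)) y)
        · intro y hy
          obtain ⟨j, rfl, hjp⟩ := (Finset.mem_filter.1 hy).2
          simpa [hPg] using hjp
        · intro y hy y' hy' hee
          obtain ⟨j, rfl, _⟩ := (Finset.mem_filter.1 hy).2
          obtain ⟨j', rfl, _⟩ := (Finset.mem_filter.1 hy').2
          simpa using hee
      -- the three disjoint pieces inside the neighborhood union
      have hsub : (F ∪ Ad) ∪ PBim ⊆ s.biUnion N := by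
        intro r hr
        rcases Finset.mem_union.1 hr with h | h
        · rcases Finset.mem_union.1 h with h | h
          · refine Finset.mem_biUnion.2 ⟨Sum.inr y0, (hmemDd y0).1 hy0, ?_⟩
            rw [hN]
            simp only [Nbhd, Sum.elim_inr]
            exact Finset.mem_union_right _ h
          · obtain ⟨y, hy, rfl⟩ := Finset.mem_image.1 h
            have hyD : y ∈ sD := (Finset.mem_filter.1 hy).1
            have hyN : ¬ ∃ j, y = Sum.inl j ∧ 0 < p j := (Finset.mem_filter.1 hy).2
            refine Finset.mem_biUnion.2 ⟨Sum.inr y, (hmemDd y).1 hyD, ?_⟩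
            rw [hN]
            simp only [Nbhd, Sum.elim_inr]
            refine Finset.mem_union_left _ ?_
            rw [if_neg hyN]
            exact Finset.mem_singleton_self _
        · obtain ⟨j, hj, rfl⟩ := Finset.mem_image.1 h
          obtain ⟨i, hiB, hji⟩ := Finset.mem_biUnion.1 hj
          have hjD : j ∈ Dset v b p R i := (Finset.mem_filter.1 hji).1
          have hjp : 0 < p j := (Finset.mem_filter.1 hji).2
          have hjne : j ≠ 0 := by
            intro h0
            rw [h0, hp.1] at hjp
            exact lt_irrefl 0 hjp
          refine Finset.mem_biUnion.2 ⟨Sum.inl i, (hmemB i).1 hiB, ?_⟩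
          rw [hN]
          simp only [Nbhd, Sum.elim_inl]
          refine Finset.mem_union_left _ (Finset.mem_image.2 ⟨j, ?_, rfl⟩)
          exact Finset.mem_filter.2 ⟨hjD, hjne⟩
      have hdj1 : Disjoint F Ad := by
        simp [hF, hAd, Finset.disjoint_left]
      have hdj2 : Disjoint (F ∪ Ad) PBim := by
        rw [Finset.disjoint_right]
        intro r hr hr'
        obtain ⟨j, hjPB, rfl⟩ := Finset.mem_image.1 hr
        have hjp : 0 < p j := by
          obtain ⟨i, _, hji⟩ := Finset.mem_biUnion.1 hjPB
          exact (Finset.mem_filter.1 hji).2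
        rcases Finset.mem_union.1 hr' with h | h
        · obtain ⟨k, _, hk⟩ := Finset.mem_image.1 h
          simp at hk
        · obtain ⟨y, hy, hy2⟩ := Finset.mem_image.1 h
          have hyj : y = Sum.inl j := Sum.inl_injective hy2
          subst hyj
          exact (Finset.mem_filter.1 hy).2 ⟨j, rfl, hjp⟩
      have hcardF : F.card = n := by
        rw [hF, Finset.card_image_of_injective _ Sum.inr_injective]
        simp
      have hcardAd : Ad.card = sDN.card :=
        Finset.card_image_of_injective _ Sum.inl_injective
      have hcardPBim : PBim.card = PB.card :=
        Finset.card_image_of_injective _ (fun a b h => by simpa using h :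
          Function.Injective (fun j : Good m => (Sum.inl (Sum.inl j) : (Good m ⊕ Fin n) ⊕ Fin n)))
      have hbig : n + sDN.card + PB.card ≤ (s.biUnion N).card := by
        calc n + sDN.card + PB.card = (F ∪ Ad).card + PBim.card := by
              rw [Finset.card_union_of_disjoint hdj1, hcardF, hcardAd, hcardPBim]
          _ = ((F ∪ Ad) ∪ PBim).card := (Finset.card_union_of_disjoint hdj2).symm
          _ ≤ (s.biUnion N).card := Finset.card_le_card hsub
      have hsDsplit : sDP.card + sDN.card = sD.card :=
        Finset.card_filter_add_card_filter_not (s := sD)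
          (p := fun y => ∃ j, y = Sum.inl j ∧ 0 < p j)
      omega
  -- Get a perfect matching
  obtain ⟨f, hfinj, hfmem⟩ := (Finset.all_card_le_biUnion_card_iff_exists_injective N).1 hall
  have hfbij : Function.Bijective f := by
    refine (Fintype.bijective_iff_injective_and_card f).2 ⟨hfinj, ?_⟩
    simp only [Fintype.card_sum, Fintype.card_fin]
    omega
  set μ : Fin n → Good m :=
    fun i => Sum.elim (Sum.elim id (fun _ => (0:Good m))) (fun _ => (0:Good m)) (f (Sum.inl i))
    with hμ
  have hfi : ∀ i : Fin n,
      (∃ j, j ∈ RDemand v b p i (R i) ∧ j ≠ 0 ∧ f (Sum.inl i) = Sum.inl (Sum.inl j)) ∨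
      ((0:Good m) ∈ RDemand v b p i (R i) ∧ f (Sum.inl i) = Sum.inl (Sum.inr i)) := by
    intro i
    have h := hfmem (Sum.inl i)
    rw [hN] at h
    simp only [Nbhd, Sum.elim_inl] at h
    rcases Finset.mem_union.1 h with h' | h'
    · obtain ⟨j, hj, hj2⟩ := Finset.mem_image.1 h'
      obtain ⟨hjD, hjne⟩ := Finset.mem_filter.1 hj
      exact Or.inl ⟨j, mem_Dset.1 hjD, hjne, hj2.symm⟩
    · by_cases h0 : (0:Good m) ∈ Dset v b p R i
      · rw [if_pos h0, Finset.mem_singleton] at h'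
        exact Or.inr ⟨mem_Dset.1 h0, h'⟩
      · rw [if_neg h0] at h'
        exact absurd h' (Finset.notMem_empty _)
  have hμval : ∀ (i : Fin n) (j : Good m), f (Sum.inl i) = Sum.inl (Sum.inl j) → μ i = j := by
    intro i j h
    rw [hμ]
    simp [h]
  have hμzero : ∀ i : Fin n, f (Sum.inl i) = Sum.inl (Sum.inr i) → μ i = 0 := by
    intro i h
    rw [hμ]
    simp [h]
  have hkey : ∀ i : Fin n, μ i ≠ 0 → f (Sum.inl i) = Sum.inl (Sum.inl (μ i)) := by
    intro i hne
    rcases hfi i with ⟨j, _, _, hfj⟩ | ⟨_, hfj⟩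
    · rw [hμval i j hfj]; exact hfj
    · exact absurd (hμzero i hfj) hne
  refine ⟨μ, ?_, ?_, ?_⟩
  · intro j hjne i i' hi hi'
    have h1 := hkey i (hi ▸ hjne)
    have h2 := hkey i' (hi' ▸ hjne)
    rw [hi] at h1
    rw [hi'] at h2
    have := hfinj (h1.trans h2.symm)
    exact Sum.inl_injective this
  · intro i
    rcases hfi i with ⟨j, hjR, _, hfj⟩ | ⟨h0R, hfj⟩
    · rw [hμval i j hfj]; exact hjR
    · rw [hμzero i hfj]; exact h0R
  · intro j hjp
    obtain ⟨l, hl⟩ := hfbij.2 (Sum.inl (Sum.inl j))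
    cases l with
    | inl i =>
      refine ⟨i, ?_⟩
      rcases hfi i with ⟨j', _, _, hfj⟩ | ⟨_, hfj⟩
      · rw [hl] at hfj
        have : j = j' := Sum.inl_injective (Sum.inl_injective hfj)
        rw [hμval i j' (by rw [hl, this])]
        exact this.symm
      · rw [hl] at hfj
        simp at hfj
    | inr y =>
      exfalso
      have h := hfmem (Sum.inr y)
      rw [hl, hN] at h
      simp only [Nbhd, Sum.elim_inr] at h
      rcases Finset.mem_union.1 h with h' | h'
      · split_ifs at h' with hy
        · exact Finset.notMem_empty _ h'
        · rw [Finset.mem_singleton] at h'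
          have hyj : y = Sum.inl j := (Sum.inl_injective h').symm
          exact hy ⟨j, hyj, hjp⟩
      · obtain ⟨k, _, hk⟩ := Finset.mem_image.1 h'
        simp at hk
end

section
/- Every two-sided matching market with unit-demand bidders having integer valuations and positive integer budgets admits a core outcome, i.e., there exists an outcome (μ,p) with no blocking pairs. -/
open scoped Classical

/-!
Run an ascending auction with bid increment `1/c`: an active bidder bids one increment on a
good of maximal surplus among those whose raised price it can still afford and still values,
displacing the current holder, and otherwise settles for the dummy good. Prices never exceed the
budget of the holder, so bids raise a bounded total price and the auction stops, in a state where
nobody envies another affordable good by more than `1/c`. As `c → ∞`, the assignments range over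
a finite set and the normalized prices over a box, so a subsequence converges; the `ε`-relaxed
core conditions are closed in `(ε, p)`, so the limit is an exact core outcome.
-/

open Finset Filter Topology

section Auction

variable {n m : ℕ} {V : Fin n → Good m → ℕ} {B : Fin n → ℕ} {μ : Fin n → Option (Good m)}
  {p : Good m → ℕ}

/-- For `k = 0` (where `V i 0 = 0` and `p 0 = 0`) the envy bound is individual rationality. -/
def InApproxDemand (V : Fin n → Good m → ℕ) (B : Fin n → ℕ) (p : Good m → ℕ) (i : Fin n)
    (j : Good m) : Prop :=
  p j ≤ B i ∧ ∀ k, B i ≤ p k ∨ V i k + p j ≤ V i j + p k + 1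

theorem InApproxDemand.mono {p' : Good m → ℕ} {i : Fin n} {j : Good m}
    (h : InApproxDemand V B p i j) (hle : p ≤ p') (hj : p' j = p j) :
    InApproxDemand V B p' i j := by
  refine ⟨hj ▸ h.1, fun k => ?_⟩
  have : p k ≤ p' k := hle k
  rcases h.2 k with h | h <;> omega

/-- A state of the ascending auction with unit bid increment, prices counted in increments;
`μ i = none` means that bidder `i` is still active. -/
structure IsAuctionState (V : Fin n → Good m → ℕ) (B : Fin n → ℕ)
    (μ : Fin n → Option (Good m)) (p : Good m → ℕ) : Prop where
  inj : ∀ i i' j, j ≠ 0 → μ i = some j → μ i' = some j → i = i'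
  price_zero : p 0 = 0
  price_eq_zero_of_unsold : ∀ j, (∀ i, μ i ≠ some j) → p j = 0
  inApproxDemand : ∀ i j, μ i = some j → InApproxDemand V B p i j

namespace IsAuctionState

theorem init : IsAuctionState V B (fun _ => none) 0 :=
  ⟨by simp, rfl, fun _ _ => rfl, by simp⟩

theorem price_le_sup (h : IsAuctionState V B μ p) (j : Good m) : p j ≤ univ.sup B := by
  by_cases hj : ∃ i, μ i = some j
  · obtain ⟨i, hi⟩ := hj
    exact (h.inApproxDemand i j hi).1.trans (le_sup (mem_univ i))
  · push Not at hj
    simp [h.price_eq_zero_of_unsold j hj]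

theorem sum_price_le (h : IsAuctionState V B μ p) : ∑ j, p j ≤ (m + 1) * univ.sup B := by
  simpa using sum_le_card_nsmul univ p _ fun j _ => h.price_le_sup j

theorem bid (hV0 : ∀ i, V i 0 = 0) (h : IsAuctionState V B μ p) {i : Fin n} {j₀ : Good m}
    (hi : μ i = none) (hB : p j₀ + 1 ≤ B i) (hV : p j₀ + 1 ≤ V i j₀)
    (hbest : ∀ j, p j + 1 ≤ B i → p j + 1 ≤ V i j → V i j - p j ≤ V i j₀ - p j₀) :
    IsAuctionState V B (fun k => if k = i then some j₀ else if μ k = some j₀ then none else μ k)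
      (p + Pi.single j₀ 1) := by
  have hj₀ : j₀ ≠ 0 := by rintro rfl; simp [hV0] at hV
  have hp_ne : ∀ j ≠ j₀, (p + Pi.single j₀ 1 : Good m → ℕ) j = p j := fun j hj => by simp [hj]
  have hp_j₀ : (p + Pi.single j₀ 1 : Good m → ℕ) j₀ = p j₀ + 1 := by simp
  refine ⟨?_, ?_, ?_, ?_⟩
  · intro k k' j hj hk hk'
    split_ifs at hk hk' <;> grind [h.inj]
  · rw [hp_ne 0 hj₀.symm, h.price_zero]
  · intro j hj
    have hj' : j ≠ j₀ := by rintro rfl; exact hj i (by simp)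
    rw [hp_ne j hj']
    refine h.price_eq_zero_of_unsold j fun k hk => hj k ?_
    have hki : k ≠ i := by rintro rfl; simp [hi] at hk
    simp [hki, hk, hj']
  · intro k j hk
    by_cases hki : k = i
    · subst hki
      obtain rfl : j₀ = j := by simpa using hk
      refine ⟨hp_j₀ ▸ hB, fun l => ?_⟩
      by_cases hl : l = j₀
      · subst hl; omega
      · have := hbest l
        rw [hp_ne l hl, hp_j₀]
        omega
    · simp only [hki, if_false] at hk
      split_ifs at hk with hkj₀
      have hj : j ≠ j₀ := by rintro rfl; exact hkj₀ hk
      exact (h.inApproxDemand k j hk).mono (fun l => by simp) (hp_ne j hj)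

theorem settle (hV0 : ∀ i, V i 0 = 0) (h : IsAuctionState V B μ p) {i : Fin n}
    (hi : μ i = none) (hnone : ∀ j, B i ≤ p j ∨ V i j ≤ p j) :
    IsAuctionState V B (Function.update μ i (some 0)) p := by
  refine ⟨?_, h.price_zero, ?_, ?_⟩
  · intro k k' j hj hk hk'
    grind [h.inj, Function.update_apply]
  · intro j hj
    refine h.price_eq_zero_of_unsold j fun k hk => ?_
    have hki : k ≠ i := by rintro rfl; simp [hi] at hk
    exact hj k (by simpa [hki] using hk)
  · intro k j hk
    by_cases hki : k = i
    · subst hki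
      obtain rfl : 0 = j := by simpa using hk
      refine ⟨by simp [h.price_zero], fun l => ?_⟩
      have := hnone l
      simp only [hV0, h.price_zero]
      omega
    · exact h.inApproxDemand k j (by simpa [hki] using hk)

end IsAuctionState

def auctionMeasure (B : Fin n → ℕ) (μ : Fin n → Option (Good m)) (p : Good m → ℕ) : ℕ ×ₗ ℕ :=
  toLex ((m + 1) * univ.sup B - ∑ j, p j, #{i | μ i = none})

theorem IsAuctionState.exists_lt_auctionMeasure (hV0 : ∀ i, V i 0 = 0)
    (h : IsAuctionState V B μ p) {i : Fin n} (hi : μ i = none) :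
    ∃ μ' p', IsAuctionState V B μ' p' ∧ auctionMeasure B μ' p' < auctionMeasure B μ p := by
  set C := univ.filter fun j => p j + 1 ≤ B i ∧ p j + 1 ≤ V i j
  by_cases hC : C.Nonempty
  · obtain ⟨j₀, hj₀, hbest⟩ := C.exists_max_image (fun j => V i j - p j) hC
    simp only [C, mem_filter, mem_univ, true_and] at hj₀ hbest
    have h' := h.bid hV0 hi hj₀.1 hj₀.2 fun j hjB hjV => hbest j ⟨hjB, hjV⟩
    refine ⟨_, _, h', Prod.Lex.toLex_lt_toLex.mpr (Or.inl ?_)⟩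
    have hsum : ∑ j, (p + Pi.single j₀ 1 : Good m → ℕ) j = ∑ j, p j + 1 := by
      simp [sum_add_distrib]
    have := h'.sum_price_le
    omega
  · have hnone : ∀ j, B i ≤ p j ∨ V i j ≤ p j := fun j => by
      by_contra! hj
      exact hC ⟨j, by simp [C]; omega⟩
    refine ⟨_, _, h.settle hV0 hi hnone, Prod.Lex.toLex_lt_toLex.mpr (Or.inr ⟨rfl, ?_⟩)⟩
    dsimp only
    refine card_lt_card ⟨fun k hk => ?_, fun hsub => ?_⟩
    · by_cases hki : k = i <;> simp_all
    · simpa using hsub (show i ∈ _ by simpa using hi)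

theorem exists_isAuctionState_settled (hV0 : ∀ i, V i 0 = 0) :
    ∃ (ν : Fin n → Good m) (q : Good m → ℕ), IsAuctionState V B (fun i => some (ν i)) q := by
  obtain ⟨⟨μ, p⟩, hs, hmin⟩ :=
    (InvImage.wf (fun s : (Fin n → Option (Good m)) × (Good m → ℕ) => auctionMeasure B s.1 s.2)
      wellFounded_lt).has_min {s | IsAuctionState V B s.1 s.2}
      ⟨(fun _ => none, 0), IsAuctionState.init⟩
  have hsettled : ∀ i, ∃ j, μ i = some j := by
    intro i
    by_contra! hi
    obtain ⟨μ', p', hs', hlt⟩ :=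
      hs.exists_lt_auctionMeasure hV0 (Option.eq_none_iff_forall_ne_some.mpr hi)
    exact hmin (μ', p') hs' hlt
  choose ν hν using hsettled
  exact ⟨ν, p, funext hν ▸ hs⟩

end Auction

section Limit

variable {n m : ℕ} {v : Fin n → Good m → ℕ} {b : Fin n → ℕ} {μ : Fin n → Good m} {P : Good m → ℝ}
  {ε : ℝ}

def IsApproxCore (v : Fin n → Good m → ℕ) (b : Fin n → ℕ) (ε : ℝ) (μ : Fin n → Good m)
    (P : Good m → ℝ) : Prop :=
  IsAssignment μ ∧ P 0 = 0 ∧ (∀ j, 0 ≤ P j) ∧ (∀ i, P (μ i) ≤ b i) ∧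
    (∀ j, (∀ i, μ i ≠ j) → P j = 0) ∧
    ∀ i j, (b i : ℝ) ≤ P j + ε ∨ (v i j : ℝ) - P j ≤ v i (μ i) - P (μ i) + ε

theorem IsAuctionState.isApproxCore {c : ℕ} (hc : 0 < c) {ν : Fin n → Good m} {q : Good m → ℕ}
    (h : IsAuctionState (fun i j => c * v i j) (fun i => c * b i) (fun i => some (ν i)) q) :
    IsApproxCore v b (1 / c) ν fun j => q j / c := by
  have hc' : (0 : ℝ) < c := by exact_mod_cast hc
  refine ⟨fun j hj i i' hi hi' => h.inj i i' j hj (by rw [hi]) (by rw [hi']),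
    by simp [h.price_zero], fun j => by positivity, fun i => ?_, fun j hj => ?_, fun i j => ?_⟩
  · rw [div_le_iff₀ hc', mul_comm]
    exact_mod_cast (h.inApproxDemand i _ rfl).1
  · simp [h.price_eq_zero_of_unsold j (by simpa using hj)]
  · rcases (h.inApproxDemand i _ rfl).2 j with hj | hj
    · left
      rw [← add_div, le_div_iff₀ hc', mul_comm]
      exact_mod_cast hj.trans (Nat.le_succ _)
    · right
      have hj' : (c : ℝ) * v i j + q (ν i) ≤ c * v i (ν i) + q j + 1 := by exact_mod_cast hj
      field_simp
      linarith

theorem IsApproxCore.mem_Icc (h : IsApproxCore v b ε μ P) :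
    P ∈ Set.Icc 0 fun _ => ((univ.sup b : ℕ) : ℝ) := by
  obtain ⟨-, -, hP, hbudget, hunsold, -⟩ := h
  refine ⟨hP, fun j => ?_⟩
  by_cases hj : ∃ i, μ i = j
  · obtain ⟨i, rfl⟩ := hj
    exact (hbudget i).trans (Nat.cast_le.mpr (le_sup (mem_univ i)))
  · push Not at hj
    simp [hunsold j hj]

theorem isClosed_setOf_isApproxCore (μ : Fin n → Good m) :
    IsClosed {x : ℝ × (Good m → ℝ) | IsApproxCore v b x.1 μ x.2} := by
  simp only [IsApproxCore, Set.ofPred_and, Set.ofPred_forall, Set.ofPred_or]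
  refine isClosed_const.inter <| (isClosed_eq (by fun_prop) (by fun_prop)).inter <|
    (isClosed_iInter fun j => isClosed_le (by fun_prop) (by fun_prop)).inter <|
    (isClosed_iInter fun i => isClosed_le (by fun_prop) (by fun_prop)).inter <|
    (isClosed_iInter fun j => isClosed_iInter fun _ =>
      isClosed_eq (by fun_prop) (by fun_prop)).inter <|
    isClosed_iInter fun i => isClosed_iInter fun j =>
      (isClosed_le (by fun_prop) (by fun_prop)).union (isClosed_le (by fun_prop) (by fun_prop))

theorem exists_isApproxCore_zero {ε : ℕ → ℝ} (hε : Tendsto ε atTop (𝓝 0))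
    (h : ∀ k, ∃ μ P, IsApproxCore v b (ε k) μ P) : ∃ μ P, IsApproxCore v b 0 μ P := by
  choose μ P hP using h
  obtain ⟨⟨μ₀, P₀⟩, -, φ, hφ, hlim⟩ := (isCompact_univ.prod isCompact_Icc).tendsto_subseq
    (x := fun k => (μ k, P k)) fun k => ⟨trivial, IsApproxCore.mem_Icc (hP k)⟩
  have hμ : ∀ᶠ t in atTop, μ (φ t) = μ₀ := by
    simpa [nhds_discrete] using hlim.fst_nhds
  have hP₀ : Tendsto (fun t => (ε (φ t), P (φ t))) atTop (𝓝 (0, P₀)) :=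
    (hε.comp hφ.tendsto_atTop).prodMk_nhds hlim.snd_nhds
  refine ⟨μ₀, P₀, (isClosed_setOf_isApproxCore μ₀).mem_of_tendsto hP₀ ?_⟩
  filter_upwards [hμ] with t ht
  exact ht ▸ hP (φ t)

theorem IsApproxCore.isCore (h : IsApproxCore v b 0 μ P) : IsCore v b μ P := by
  obtain ⟨hμ, hP0, hP, hbudget, hunsold, hstable⟩ := h
  refine ⟨⟨hμ, ⟨hP0, hP⟩, hbudget, fun j hj => ?_⟩, fun i j ⟨hlt, hj⟩ => ?_⟩
  · have hj0 : j ≠ 0 := by rintro rfl; simp [hP0] at hj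
    obtain ⟨i, hi⟩ : ∃ i, μ i = j := by
      by_contra! hnone
      simp [hunsold j hnone] at hj
    exact ⟨i, hi, fun i' hi' => hμ j hj0 i' i hi' hi⟩
  · rw [util, util, if_pos (hbudget i), if_pos hj.le, WithBot.coe_lt_coe] at hlt
    rcases hstable i j with h | h <;> linarith

end Limit

theorem exists_core_outcome_general (n m : ℕ)
    (v : Fin n → Good m → ℕ) (b : Fin n → ℕ)
    (hv0 : ∀ i, v i 0 = 0) :
    ∃ (μ : Fin n → Good m) (p : Good m → ℝ), IsCore v b μ p := by
  have happrox (k : ℕ) : ∃ μ P, IsApproxCore v b (1 / ((k : ℝ) + 1)) μ P := by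
    obtain ⟨ν, q, h⟩ := exists_isAuctionState_settled (V := fun i j => (k + 1) * v i j)
      (B := fun i => (k + 1) * b i) (by simp [hv0])
    exact ⟨ν, _, by exact_mod_cast h.isApproxCore k.succ_pos⟩
  obtain ⟨μ, P, h⟩ := exists_isApproxCore_zero tendsto_one_div_add_atTop_nhds_zero_nat happrox
  exact ⟨μ, P, h.isCore⟩

/-- Every two-sided matching market with unit-demand bidders having
integer valuations and positive integer budgets admits a core outcome. -/
theorem exists_core_outcome (n m : ℕ)
    (v : Fin n → Good m → ℕ) (b : Fin n → ℕ)
    (hv0 : ∀ i, v i 0 = 0) (hb : ∀ i, 0 < b i) :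
    ∃ (μ : Fin n → Good m) (p : Good m → ℝ), IsCore v b μ p :=
  exists_core_outcome_general n m v b hv0
end

section
/- Let (μ,p) and (ν,q) be core outcomes of a two-sided matching market with budget-constrained bidders. If π_i(μ(i),p) ≥ π_i(ν(i),q) for all bidders i, then Σ_{i∈B} v_i(μ(i)) ≥ Σ_{i∈B} v_i(ν(i)). -/
open scoped Classical

/-!
Evaluate both outcomes at the prices `p`. Every bidder weakly prefers `μ i` to `ν i` at `p`:
if `q (ν i) ≤ p (ν i)` this follows from the utility domination, and otherwise `ν i` is strictly
affordable for bidder `i` at `p`, so it would block `(μ, p)` unless it were no better than `μ i`.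
Summing over bidders, `v(ν) - p(ν) ≤ v(μ) - p(μ)`. Since `(μ, p)` sells every positively priced
good exactly once, `p(μ)` is the total price of all goods, which bounds `p(ν)` because `ν` is an
assignment. Hence `v(ν) ≤ v(μ)`.
-/

open Finset

theorem Finset.sum_comp_eq_sum_card_fiber_mul {ι κ : Type*} [Fintype ι] [Fintype κ]
    [DecidableEq κ] (σ : ι → κ) (p : κ → ℝ) :
    ∑ i, p (σ i) = ∑ j, (#{i | σ i = j} : ℝ) * p j := by
  rw [← Finset.sum_fiberwise univ σ]
  refine sum_congr rfl fun j _ => ?_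
  rw [sum_congr rfl fun i hi => congrArg p (mem_filter.mp hi).2, sum_const, nsmul_eq_mul]

section Market

variable {n m : ℕ} {v : Fin n → Good m → ℕ} {b : Fin n → ℕ} {μ : Fin n → Good m}
  {p : Good m → ℝ}

theorem IsAssignment.sum_price_le (hμ : IsAssignment μ) (hp : IsPriceVec p) :
    ∑ i, p (μ i) ≤ ∑ j, p j := by
  rw [sum_comp_eq_sum_card_fiber_mul]
  refine sum_le_sum fun j _ => ?_
  rcases eq_or_ne j 0 with rfl | hj
  · simp [hp.1]
  · have hcard : #{i | μ i = j} ≤ 1 := card_le_one.mpr fun i hi i' hi' =>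
      hμ j hj i i' (mem_filter.mp hi).2 (mem_filter.mp hi').2
    exact mul_le_of_le_one_left (hp.2 j) (by exact_mod_cast hcard)

theorem IsOutcome.sum_price_eq (h : IsOutcome b μ p) : ∑ i, p (μ i) = ∑ j, p j := by
  rw [sum_comp_eq_sum_card_fiber_mul]
  refine sum_congr rfl fun j _ => ?_
  rcases (h.2.1.2 j).eq_or_lt with hj | hj
  · simp [← hj]
  · obtain ⟨i, hi, huniq⟩ := h.2.2.2 j hj
    have hfiber : ({k | μ k = j} : Finset (Fin n)) = {i} := by
      ext k
      simpa only [mem_filter, mem_univ, true_and, mem_singleton] using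
        ⟨fun hk => huniq k hk, fun hk => hk ▸ hi⟩
    simp [hfiber]

theorem util_of_le {i : Fin n} {j : Good m} (hj : p j ≤ b i) :
    util v b p i j = ((v i j - p j : ℝ) : WithBot ℝ) :=
  if_pos hj

theorem IsCore.value_sub_price_le (hcore : IsCore v b μ p) {i : Fin n} {j : Good m}
    (hj : p j < b i) : (v i j : ℝ) - p j ≤ v i (μ i) - p (μ i) := by
  have hnotlt : ¬ util v b p i (μ i) < util v b p i j := fun hlt => hcore.2 i j ⟨hlt, hj⟩
  rwa [not_lt, util_of_le hj.le, util_of_le (hcore.1.2.2.1 i), WithBot.coe_le_coe] at hnotlt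

theorem IsCore.value_sub_price_le_of_util_le (hcore : IsCore v b μ p) {q : Good m → ℝ}
    {i : Fin n} {j : Good m} (hqj : q j ≤ b i) (hdom : util v b q i j ≤ util v b p i (μ i)) :
    (v i j : ℝ) - p j ≤ v i (μ i) - p (μ i) := by
  rcases le_or_gt (q j) (p j) with hqp | hpq
  · rw [util_of_le hqj, util_of_le (hcore.1.2.2.1 i), WithBot.coe_le_coe] at hdom
    linarith
  · exact hcore.value_sub_price_le (hpq.trans_le hqj)

end Market

theorem welfare_le_of_utility_dominating_core_general {n m : ℕ}
    (v : Fin n → Good m → ℕ) (b : Fin n → ℕ)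
    (μ : Fin n → Good m) (p : Good m → ℝ)
    (ν : Fin n → Good m) (q : Good m → ℝ)
    (hcore₁ : IsCore v b μ p) (hcore₂ : IsCore v b ν q)
    (hdom : ∀ i, util v b q i (ν i) ≤ util v b p i (μ i)) :
    ∑ i, v i (ν i) ≤ ∑ i, v i (μ i) := by
  have hsurplus : ∑ i, ((v i (ν i) : ℝ) - p (ν i)) ≤ ∑ i, ((v i (μ i) : ℝ) - p (μ i)) :=
    sum_le_sum fun i _ => hcore₁.value_sub_price_le_of_util_le (hcore₂.1.2.2.1 i) (hdom i)
  rw [sum_sub_distrib, sum_sub_distrib, hcore₁.1.sum_price_eq] at hsurplus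
  have hprice : ∑ i, p (ν i) ≤ ∑ j, p j := hcore₂.1.1.sum_price_le hcore₁.1.2.1
  exact_mod_cast (by linarith : ∑ i, (v i (ν i) : ℝ) ≤ ∑ i, (v i (μ i) : ℝ))

/-- If `(μ,p)` and `(ν,q)` are core outcomes and every bidder is weakly
better off under `(μ,p)`, then `(μ,p)` generates at least as much welfare as `(ν,q)`. -/
theorem welfare_le_of_utility_dominating_core {n m : ℕ}
    (v : Fin n → Good m → ℕ) (b : Fin n → ℕ)
    (hv0 : ∀ i, v i 0 = 0) (hb : ∀ i, 0 < b i)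
    (μ : Fin n → Good m) (p : Good m → ℝ)
    (ν : Fin n → Good m) (q : Good m → ℝ)
    (hcore₁ : IsCore v b μ p) (hcore₂ : IsCore v b ν q)
    (hdom : ∀ i, util v b q i (ν i) ≤ util v b p i (μ i)) :
    ∑ i, v i (ν i) ≤ ∑ i, v i (μ i) :=
  welfare_le_of_utility_dominating_core_general v b μ p ν q hcore₁ hcore₂ hdom
end

section
/- Every two-sided matching market with budget-constrained unit-demand bidders admits a core outcome (μ,p) that maximizes welfare among all core outcomes, i.e., Σ_{i∈B} v_i(μ(i)) ≥ Σ_{i∈B} v_i(ν(i)) for every core outcome (ν,q). -/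
open scoped Classical

/-- Auction invariant with natural-number prices. -/
def AInv {n m : ℕ} (v : Fin n → Good m → ℕ) (b : Fin n → ℕ)
    (μ : Fin n → Good m) (p : Good m → ℕ) : Prop :=
  IsAssignment μ ∧ p 0 = 0 ∧ (∀ j, 0 < p j → ∃ i, μ i = j) ∧
  (∀ i, p (μ i) ≤ b i) ∧
  (∀ i, μ i ≠ 0 → ∀ j, p j < b i → (v i j : ℤ) - p j ≤ (v i (μ i) : ℤ) - p (μ i) + 1)

lemma AInv.price_le_sup {n m : ℕ} {v : Fin n → Good m → ℕ} {b : Fin n → ℕ}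
    {μ : Fin n → Good m} {p : Good m → ℕ} (h : AInv v b μ p) (j : Good m) :
    p j ≤ Finset.univ.sup b := by
  rcases Nat.eq_zero_or_pos (p j) with h0 | h0
  · simp [h0]
  · obtain ⟨i, hi⟩ := h.2.2.1 j h0
    calc p j = p (μ i) := by rw [hi]
    _ ≤ b i := h.2.2.2.1 i
    _ ≤ Finset.univ.sup b := Finset.le_sup (Finset.mem_univ i)

lemma AInv.sum_le {n m : ℕ} {v : Fin n → Good m → ℕ} {b : Fin n → ℕ}
    {μ : Fin n → Good m} {p : Good m → ℕ} (h : AInv v b μ p) :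
    ∑ j, p j ≤ (m + 1) * Finset.univ.sup b := by
  calc ∑ j, p j ≤ ∑ _j : Good m, Finset.univ.sup b :=
        Finset.sum_le_sum fun j _ => h.price_le_sup j
  _ = (m + 1) * Finset.univ.sup b := by simp [Finset.sum_const, mul_comm]

lemma auction_go {n m : ℕ} (v : Fin n → Good m → ℕ) (b : Fin n → ℕ)
    (hv0 : ∀ i, v i 0 = 0) :
    ∀ (fuel : ℕ) (μ : Fin n → Good m) (p : Good m → ℕ), AInv v b μ p →
      (m + 1) * Finset.univ.sup b + 1 ≤ (∑ j, p j) + fuel →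
      ∃ μ' p', AInv v b μ' p' ∧
        ∀ i, μ' i = 0 → ∀ j, j ≠ 0 → p' j + 1 ≤ b i → v i j ≤ p' j := by
  intro fuel
  induction fuel with
  | zero =>
    intro μ p hinv hfuel
    have := hinv.sum_le
    omega
  | succ fuel ih =>
    intro μ p hinv hfuel
    by_cases hterm : ∀ i, μ i = 0 → ∀ j, j ≠ 0 → p j + 1 ≤ b i → v i j ≤ p j
    · exact ⟨μ, p, hinv, hterm⟩
    · push_neg at hterm
      obtain ⟨i, hi0, j₀, hj₀ne, hj₀b, hj₀v⟩ := hterm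
      -- the set of attractive goods for i
      set F : Finset (Good m) :=
        Finset.univ.filter (fun j => j ≠ 0 ∧ p j + 1 ≤ b i ∧ p j + 1 ≤ v i j) with hF
      have hj₀F : j₀ ∈ F := by
        simp only [hF, Finset.mem_filter, Finset.mem_univ, true_and]
        exact ⟨hj₀ne, hj₀b, by omega⟩
      obtain ⟨js, hjsF, hjsmax⟩ :=
        F.exists_max_image (fun j => v i j - p j) ⟨j₀, hj₀F⟩
      simp only [hF, Finset.mem_filter, Finset.mem_univ, true_and] at hjsF
      obtain ⟨hjsne, hjsb, hjsv⟩ := hjsF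
      have hjsmax' : ∀ j, j ≠ 0 → p j + 1 ≤ b i → p j + 1 ≤ v i j →
          (v i j : ℤ) - p j ≤ (v i js : ℤ) - p js := by
        intro j h1 h2 h3
        have := hjsmax j (by
          simp only [hF, Finset.mem_filter, Finset.mem_univ, true_and]
          exact ⟨h1, h2, h3⟩)
        omega
      set μ' : Fin n → Good m := fun x => if x = i then js else if μ x = js then 0 else μ x
        with hμ'
      set p' : Good m → ℕ := Function.update p js (p js + 1) with hp'
      have hμ'i : μ' i = js := by simp [hμ']
      have hp'js : p' js = p js + 1 := by simp [hp']
      have hp'other : ∀ j, j ≠ js → p' j = p j := by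
        intro j hj; simp [hp', Function.update_of_ne hj]
      have hp'ge : ∀ j, p j ≤ p' j := by
        intro j; by_cases hj : j = js
        · subst hj; omega
        · rw [hp'other j hj]
      have hmueq : ∀ x, x ≠ i → μ x ≠ js → μ' x = μ x := by
        intro x hx hxs; simp [hμ', hx, hxs]
      have hmudisp : ∀ x, x ≠ i → μ x = js → μ' x = 0 := by
        intro x hx hxs; simp [hμ', hx, hxs]
      have h0ne : (0 : Good m) ≠ js := fun h => hjsne h.symm
      have hjs_holder : ∀ y, μ' y = js → y = i := by
        intro y hy
        by_cases hyi : y = i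
        · exact hyi
        · exfalso
          by_cases hys : μ y = js
          · rw [hmudisp y hyi hys] at hy; exact h0ne hy
          · rw [hmueq y hyi hys] at hy; exact hys hy
      have hinv' : AInv v b μ' p' := by
        refine ⟨?_, ?_, ?_, ?_, ?_⟩
        · -- IsAssignment
          intro j hj x x' hx hx'
          by_cases hjjs : j = js
          · subst hjjs
            rw [hjs_holder x hx, hjs_holder x' hx']
          · have hx2 : μ x = j := by
              by_cases hxi : x = i
              · rw [hxi, hμ'i] at hx; exact absurd hx.symm hjjs
              · by_cases hxs : μ x = js
                · rw [hmudisp x hxi hxs] at hx; exact absurd hx.symm hj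
                · rwa [hmueq x hxi hxs] at hx
            have hx'2 : μ x' = j := by
              by_cases hxi : x' = i
              · rw [hxi, hμ'i] at hx'; exact absurd hx'.symm hjjs
              · by_cases hxs : μ x' = js
                · rw [hmudisp x' hxi hxs] at hx'; exact absurd hx'.symm hj
                · rwa [hmueq x' hxi hxs] at hx'
            exact hinv.1 j hj x x' hx2 hx'2
        · -- p' 0 = 0
          rw [hp'other 0 h0ne]; exact hinv.2.1
        · -- positive prices assigned
          intro j hj
          by_cases hjjs : j = js
          · exact ⟨i, by rw [hjjs, hμ'i]⟩
          · rw [hp'other j hjjs] at hj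
            obtain ⟨x, hx⟩ := hinv.2.2.1 j hj
            have hxi : x ≠ i := by
              intro h; subst h; rw [hi0] at hx
              have : p j = 0 := hx ▸ hinv.2.1
              omega
            have hxs : μ x ≠ js := by rw [hx]; exact hjjs
            exact ⟨x, by rw [hmueq x hxi hxs, hx]⟩
        · -- budgets
          intro x
          by_cases hxi : x = i
          · subst hxi; rw [hμ'i, hp'js]; exact hjsb
          · by_cases hxs : μ x = js
            · rw [hmudisp x hxi hxs, hp'other 0 h0ne, hinv.2.1]; exact Nat.zero_le _
            · rw [hmueq x hxi hxs, hp'other _ hxs]; exact hinv.2.2.2.1 x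
        · -- stability for assigned bidders
          intro x hx j hj
          by_cases hxi : x = i
          · rw [hxi] at hj ⊢
            rw [hμ'i, hp'js]
            by_cases hjjs : j = js
            · subst hjjs; rw [hp'js]; push_cast; omega
            · rw [hp'other j hjjs] at hj ⊢
              by_cases hj0 : j = 0
              · subst hj0
                rw [hinv.2.1, hv0 i]
                push_cast
                omega
              · by_cases hjv : p j + 1 ≤ v i j
                · have := hjsmax' j hj0 (by omega) hjv
                  omega
                · push_cast; omega
          · by_cases hxs : μ x = js
            · exact absurd (hmudisp x hxi hxs) hx
            · rw [hmueq x hxi hxs] at hx ⊢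
              rw [hp'other _ hxs]
              have hpj : p j < b x := lt_of_le_of_lt (hp'ge j) hj
              have h5 := hinv.2.2.2.2 x hx j hpj
              have h6 := hp'ge j
              omega
      -- sum increases
      have hsum : ∑ j, p' j = (∑ j, p j) + 1 := by
        rw [hp', Finset.sum_update_of_mem (Finset.mem_univ js), Finset.sdiff_singleton_eq_erase]
        rw [← Finset.add_sum_erase Finset.univ p (Finset.mem_univ js)]
        omega
      exact ih μ' p' hinv' (by omega)

lemma auction_exists {n m : ℕ} (v : Fin n → Good m → ℕ) (b : Fin n → ℕ)
    (hv0 : ∀ i, v i 0 = 0) :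
    ∃ (μ : Fin n → Good m) (p : Good m → ℕ),
      IsAssignment μ ∧ p 0 = 0 ∧ (∀ j, 0 < p j → ∃ i, μ i = j) ∧
      (∀ i, p (μ i) ≤ b i) ∧
      (∀ i j, p j < b i → (v i j : ℤ) - p j ≤ (v i (μ i) : ℤ) - p (μ i) + 1) := by
  have h0 : AInv v b (fun _ => 0) (fun _ => 0) := by
    refine ⟨?_, rfl, ?_, ?_, ?_⟩
    · intro j hj x x' hx hx'; exact absurd hx.symm hj
    · intro j hj; exact absurd hj (by simp)
    · intro i; exact Nat.zero_le _
    · intro i hi; exact absurd rfl hi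
  obtain ⟨μ, p, hinv, hterm⟩ := auction_go v b hv0
    ((m + 1) * Finset.univ.sup b + 1) (fun _ => 0) (fun _ => 0) h0 (by simp)
  refine ⟨μ, p, hinv.1, hinv.2.1, hinv.2.2.1, hinv.2.2.2.1, ?_⟩
  intro i j hpj
  by_cases hi : μ i = 0
  · rw [hi, hinv.2.1, hv0 i]
    by_cases hj0 : j = 0
    · subst hj0; simp [hinv.2.1, hv0]
    · have := hterm i hi j hj0 (by omega)
      push_cast; omega
  · exact hinv.2.2.2.2 i hi j hpj

open Filter Topology

lemma exists_core {n m : ℕ} (v : Fin n → Good m → ℕ) (b : Fin n → ℕ)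
    (hv0 : ∀ i, v i 0 = 0) :
    ∃ (μ : Fin n → Good m) (p : Good m → ℝ), IsCore v b μ p := by
  have H : ∀ N : ℕ, ∃ (μ : Fin n → Good m) (p : Good m → ℕ),
      IsAssignment μ ∧ p 0 = 0 ∧ (∀ j, 0 < p j → ∃ i, μ i = j) ∧
      (∀ i, p (μ i) ≤ (N + 1) * b i) ∧
      (∀ i j, p j < (N + 1) * b i →
        ((N:ℤ) + 1) * v i j - p j ≤ ((N:ℤ) + 1) * v i (μ i) - p (μ i) + 1) := by
    intro N
    obtain ⟨μ, p, h1, h2, h3, h4, h5⟩ :=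
      auction_exists (fun i j => (N + 1) * v i j) (fun i => (N + 1) * b i)
        (fun i => by simp [hv0])
    refine ⟨μ, p, h1, h2, h3, h4, ?_⟩
    intro i j h
    have := h5 i j h
    push_cast at this ⊢
    omega
  choose μs ps h1 h2 h3 h4 h5 using H
  -- pigeonhole: infinitely many N share the same assignment
  obtain ⟨μ, hμinf⟩ := Finite.exists_infinite_fiber μs
  have hSinf : {N | μs N = μ}.Infinite := by
    rw [Set.infinite_coe_iff] at hμinf
    exact hμinf
  set e : ℕ → ℕ := Nat.nth (fun N => μs N = μ) with he
  have he_mono : StrictMono e := Nat.nth_strictMono hSinf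
  have he_mem : ∀ k, μs (e k) = μ := fun k => Nat.nth_mem_of_infinite hSinf k
  -- the real price sequence
  set B : ℝ := ((Finset.univ.sup b : ℕ) : ℝ) with hB
  set q : ℕ → Good m → ℝ := fun k j => (ps (e k) j : ℝ) / (e k + 1) with hq
  have hKpos : ∀ k, (0:ℝ) < (e k : ℝ) + 1 := fun k => by positivity
  have hps_le : ∀ N j, (ps N j : ℝ) ≤ (N + 1) * B := by
    intro N j
    rcases Nat.eq_zero_or_pos (ps N j) with h | h
    · rw [h]; push_cast; positivity
    · obtain ⟨i, hi⟩ := h3 N j h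
      have h4' := h4 N i
      rw [hi] at h4'
      have hbB : (b i : ℝ) ≤ B := by
        rw [hB]; exact_mod_cast Finset.le_sup (Finset.mem_univ i)
      calc (ps N j : ℝ) ≤ ((N + 1) * b i : ℕ) := by exact_mod_cast h4'
      _ = ((N:ℝ) + 1) * b i := by push_cast; ring
      _ ≤ ((N:ℝ) + 1) * B := by
          apply mul_le_mul_of_nonneg_left hbB; positivity
  have hq_mem : ∀ k, q k ∈ Set.pi Set.univ (fun _ : Good m => Set.Icc (0:ℝ) B) := by
    intro k
    rw [Set.mem_univ_pi]
    intro j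
    constructor
    · rw [hq]; positivity
    · rw [hq]
      rw [div_le_iff₀ (hKpos k)]
      calc (ps (e k) j : ℝ) ≤ ((e k) + 1) * B := hps_le (e k) j
      _ = B * ((e k : ℝ) + 1) := by ring
  obtain ⟨qlim, hqbox, φ, hφ, hconv⟩ :=
    (isCompact_univ_pi (fun _ : Good m => isCompact_Icc)).tendsto_subseq hq_mem
  have hpt : ∀ j, Tendsto (fun k => q (φ k) j) atTop (𝓝 (qlim j)) := by
    intro j
    exact (tendsto_pi_nhds.1 hconv) j
  -- q k 0 = 0
  have hq0 : ∀ k, q k 0 = 0 := by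
    intro k; rw [hq]; simp [h2]
  have hqlim0 : qlim 0 = 0 := by
    have : Tendsto (fun k => q (φ k) 0) atTop (𝓝 0) := by
      simp only [hq0]; exact tendsto_const_nhds
    exact tendsto_nhds_unique (hpt 0) this
  have hqnonneg : ∀ j, 0 ≤ qlim j := by
    intro j
    have := hqbox j (Set.mem_univ j)
    exact this.1
  -- budgets in the limit
  have hbud : ∀ i, qlim (μ i) ≤ (b i : ℝ) := by
    intro i
    apply le_of_tendsto (hpt (μ i))
    apply Eventually.of_forall
    intro k
    show (ps (e (φ k)) (μ i) : ℝ) / ((e (φ k) : ℝ) + 1) ≤ (b i : ℝ)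
    rw [div_le_iff₀ (hKpos (φ k))]
    have h4' := h4 (e (φ k)) i
    rw [he_mem (φ k)] at h4'
    calc (ps (e (φ k)) (μ i) : ℝ) ≤ (((e (φ k)) + 1) * b i : ℕ) := by exact_mod_cast h4'
    _ = (b i : ℝ) * ((e (φ k) : ℝ) + 1) := by push_cast; ring
  -- positively-priced goods are uniquely assigned in the limit
  have hassigned : ∀ j : Good m, 0 < qlim j → ∃! i, μ i = j := by
    intro j hj
    have hjne : j ≠ 0 := by
      intro h; rw [h, hqlim0] at hj; exact lt_irrefl _ hj
    have hex : ∃ i, μ i = j := by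
      by_contra hno
      push_neg at hno
      have hzero : ∀ k, q (φ k) j = 0 := by
        intro k
        rcases Nat.eq_zero_or_pos (ps (e (φ k)) j) with h | h
        · rw [hq]; simp [h]
        · obtain ⟨i, hi⟩ := h3 (e (φ k)) j h
          rw [he_mem (φ k)] at hi
          exact absurd hi (hno i)
      have : Tendsto (fun k => q (φ k) j) atTop (𝓝 0) := by
        simp only [hzero]; exact tendsto_const_nhds
      have := tendsto_nhds_unique (hpt j) this
      rw [this] at hj; exact lt_irrefl _ hj
    obtain ⟨i, hi⟩ := hex
    have hassign : IsAssignment μ := by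
      have := h1 (e 0); rwa [he_mem 0] at this
    exact ⟨i, hi, fun i' hi' => hassign j hjne i' i hi' hi⟩
  -- one over K tends to zero
  have hKtop : Tendsto (fun k => (e (φ k) : ℝ) + 1) atTop atTop := by
    apply tendsto_atTop_add_const_right
    apply tendsto_natCast_atTop_atTop.comp
    apply StrictMono.tendsto_atTop
    exact he_mono.comp hφ
  have hinv_zero : Tendsto (fun k => ((e (φ k) : ℝ) + 1)⁻¹) atTop (𝓝 0) :=
    tendsto_inv_atTop_zero.comp hKtop
  refine ⟨μ, qlim, ⟨?_, ⟨hqlim0, hqnonneg⟩, hbud, hassigned⟩, ?_⟩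
  · have := h1 (e 0); rwa [he_mem 0] at this
  -- no blocking pairs
  intro i j hblock
  obtain ⟨hlt, hbj⟩ := hblock
  rw [util, util, if_pos hbj.le, if_pos (hbud i)] at hlt
  have hlt' : (v i (μ i) : ℝ) - qlim (μ i) < (v i j : ℝ) - qlim j :=
    WithBot.coe_lt_coe.1 hlt
  -- eventually q (φ k) j < b i
  have hev : ∀ᶠ k in atTop, q (φ k) j < (b i : ℝ) :=
    (hpt j).eventually_lt_const hbj
  have key : ∀ᶠ k in atTop,
      (v i j : ℝ) - q (φ k) j ≤
        (v i (μ i) : ℝ) - q (φ k) (μ i) + ((e (φ k) : ℝ) + 1)⁻¹ := by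
    filter_upwards [hev] with k hk
    set N := e (φ k) with hN
    have hnat : ps N j < (N + 1) * b i := by
      have : (ps N j : ℝ) < ((N:ℝ) + 1) * b i := by
        have hk' : (ps N j : ℝ) / ((N : ℝ) + 1) < (b i : ℝ) := hk
        rw [div_lt_iff₀ (hKpos (φ k))] at hk'
        calc (ps N j : ℝ) < (b i : ℝ) * ((N:ℝ) + 1) := hk'
        _ = ((N:ℝ) + 1) * b i := by ring
      exact_mod_cast this
    have h5' := h5 N i j hnat
    rw [he_mem (φ k)] at h5'
    have hc : ((N:ℝ) + 1) * v i j - ps N j ≤ ((N:ℝ) + 1) * v i (μ i) - ps N (μ i) + 1 := by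
      exact_mod_cast h5'
    have hKpos' := hKpos (φ k)
    have hKne : ((N:ℝ) + 1) ≠ 0 := ne_of_gt hKpos'
    show (v i j : ℝ) - (ps N j : ℝ) / ((N:ℝ) + 1) ≤
      (v i (μ i) : ℝ) - (ps N (μ i) : ℝ) / ((N:ℝ) + 1) + ((N:ℝ) + 1)⁻¹
    have e1 : (v i j : ℝ) - (ps N j : ℝ) / ((N:ℝ) + 1)
        = (((N:ℝ) + 1) * v i j - ps N j) / ((N:ℝ) + 1) := by field_simp
    have e2 : (v i (μ i) : ℝ) - (ps N (μ i) : ℝ) / ((N:ℝ) + 1) + ((N:ℝ) + 1)⁻¹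
        = (((N:ℝ) + 1) * v i (μ i) - ps N (μ i) + 1) / ((N:ℝ) + 1) := by
      field_simp
    rw [e1, e2]
    gcongr
  have limL : Tendsto (fun k => (v i j : ℝ) - q (φ k) j) atTop
      (𝓝 ((v i j : ℝ) - qlim j)) := tendsto_const_nhds.sub (hpt j)
  have limR : Tendsto
      (fun k => (v i (μ i) : ℝ) - q (φ k) (μ i) + ((e (φ k) : ℝ) + 1)⁻¹) atTop
      (𝓝 ((v i (μ i) : ℝ) - qlim (μ i) + 0)) :=
    (tendsto_const_nhds.sub (hpt (μ i))).add hinv_zero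
  rw [add_zero] at limR
  have hfin := le_of_tendsto_of_tendsto limL limR key
  linarith


/-- Every two-sided matching market with budget-constrained
unit-demand bidders admits a core outcome maximizing welfare among all core outcomes. -/
theorem exists_welfare_maximizing_core_outcome (n m : ℕ)
    (v : Fin n → Good m → ℕ) (b : Fin n → ℕ)
    (hv0 : ∀ i, v i 0 = 0) (hb : ∀ i, 0 < b i) :
    ∃ (μ : Fin n → Good m) (p : Good m → ℝ), IsCore v b μ p ∧
      ∀ (ν : Fin n → Good m) (q : Good m → ℝ), IsCore v b ν q →
        ∑ i, v i (ν i) ≤ ∑ i, v i (μ i) := by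
  set W : Set ℕ := {w | ∃ (ν : Fin n → Good m) (q : Good m → ℝ),
    IsCore v b ν q ∧ ∑ i, v i (ν i) = w} with hW
  have hne : W.Nonempty := by
    obtain ⟨μ, p, h⟩ := exists_core v b hv0
    exact ⟨∑ i, v i (μ i), μ, p, h, rfl⟩
  have hbdd : BddAbove W := by
    refine ⟨∑ i, Finset.univ.sup (v i), ?_⟩
    rintro w ⟨ν, q, hc, rfl⟩
    exact Finset.sum_le_sum fun i _ => Finset.le_sup (Finset.mem_univ (ν i))
  obtain ⟨ν, q, hc, hw⟩ := Nat.sSup_mem hne hbdd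
  refine ⟨ν, q, hc, fun ν' q' hc' => ?_⟩
  rw [hw]
  exact le_csSup hbdd ⟨ν', q', hc', rfl⟩
end

section
/- In assignment markets with payoff-maximizing but budget-constrained bidders there is no incentive-compatible mechanism terminating in a core-stable outcome for every input. Precisely: consider the market with bidders B = {1,2,3} and goods S = {A,B,0}. There is no direct mechanism M, mapping each reported profile ((v_1,b^1),(v_2,b^2),(v_3,b^3)) of valuations v_i : S → ℤ_{≥0} with v_i(0) = 0 and budgets b^i ∈ ℤ_{>0} to an outcome (μ,p) that is a core outcome with respect to the reported profile, such that truthful reporting is optimal for every bidder; i.e., for every such M there exist a true profile, a bidder i, and a unilateral misreport (v'_i,b'^i) such that bidder i's utility π_i (computed with i's true valuation and true budget) of the good and price assigned to i by M under the misreport strictly exceeds i's utility under M with truthful reports. -/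
open scoped Classical

/-- The hard market: all three bidders value both goods at `10`. -/
def vv3 : Fin 3 → Good 2 → ℕ := fun _ j => if j = 0 then 0 else 10

/-- True budgets: everyone has budget `3`. -/
def bb3 : Fin 3 → ℕ := fun _ => 3

lemma exists_unassigned (μ : Fin 3 → Good 2) (hA : IsAssignment μ) : ∃ i, μ i = 0 := by
  by_contra hc
  push_neg at hc
  have h3 : ∀ x : Good 2, x ≠ 0 → x = 1 ∨ x = 2 := by decide
  rcases h3 _ (hc 0) with h0 | h0 <;> rcases h3 _ (hc 1) with h1 | h1 <;>
      rcases h3 _ (hc 2) with h2 | h2 <;>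
    first
      | exact absurd (hA _ (by decide) 0 1 h0 h1) (by decide)
      | exact absurd (hA _ (by decide) 0 2 h0 h2) (by decide)
      | exact absurd (hA _ (by decide) 1 2 h1 h2) (by decide)

lemma key (i : Fin 3) (μ : Fin 3 → Good 2) (p : Good 2 → ℝ)
    (h : IsCore vv3 (Function.update bb3 i 5) μ p) : μ i ≠ 0 ∧ p (μ i) ≤ 3 := by
  obtain ⟨⟨hA, ⟨hp0, hpnn⟩, hbud, hpos⟩, hnb⟩ := h
  set b' := Function.update bb3 i 5 with hb'def
  have hb'i : ((b' i : ℕ) : ℝ) = 5 := by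
    rw [hb'def, Function.update_self]; norm_num
  have hb'j : ∀ j, j ≠ i → ((b' j : ℕ) : ℝ) = 3 := by
    intro j hj
    rw [hb'def, Function.update_of_ne hj]
    norm_num [bb3]
  -- any unassigned bidder pushes the price of each real good up to their budget
  have lower : ∀ (j : Fin 3) (g : Good 2), g ≠ 0 → μ j = 0 → ((b' j : ℕ) : ℝ) ≤ p g := by
    intro j g hg hj
    by_contra hlt
    push_neg at hlt
    have hble : ((b' j : ℕ) : ℝ) ≤ 5 := by
      by_cases hji : j = i
      · subst hji; rw [hb'i]
      · rw [hb'j j hji]; norm_num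
    refine hnb j g ⟨?_, hlt⟩
    rw [hj]
    have hc0 : p 0 ≤ ((b' j : ℕ) : ℝ) := by rw [hp0]; exact Nat.cast_nonneg _
    have hcg : p g ≤ ((b' j : ℕ) : ℝ) := le_of_lt hlt
    simp only [util]
    rw [if_pos hc0, if_pos hcg]
    apply WithBot.coe_lt_coe.mpr
    have e0 : vv3 j 0 = 0 := rfl
    have eg : vv3 j g = 10 := if_neg hg
    rw [e0, eg, hp0]
    push_cast
    linarith
  -- Step A: bidder i is assigned a real good
  have hAi : μ i ≠ 0 := by
    intro h0
    have h5 : (5 : ℝ) ≤ p 1 := hb'i ▸ lower i 1 (by decide) h0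
    have hpos1 : 0 < p 1 := lt_of_lt_of_le (by norm_num) h5
    obtain ⟨k, hk, -⟩ := hpos 1 hpos1
    have hki : k ≠ i := by
      rintro rfl
      rw [h0] at hk
      exact absurd hk (by decide)
    have hbk := hbud k
    rw [hk, hb'j k hki] at hbk
    linarith
  refine ⟨hAi, ?_⟩
  -- Step B: the price of i's good is at most 3
  obtain ⟨j, hj⟩ := exists_unassigned μ hA
  have hji : j ≠ i := by rintro rfl; exact hAi hj
  obtain ⟨g2, hg20, hg2ne⟩ : ∃ y : Good 2, y ≠ 0 ∧ y ≠ μ i := by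
    have hall : ∀ x : Good 2, x ≠ 0 → ∃ y : Good 2, y ≠ 0 ∧ y ≠ x := by decide
    exact hall _ hAi
  -- the other good g2 has price exactly 3
  have h3h : (3 : ℝ) ≤ p g2 := by
    have hl := lower j g2 hg20 hj
    rwa [hb'j j hji] at hl
  obtain ⟨k, hk, -⟩ := hpos g2 (by linarith)
  have hki : k ≠ i := by rintro rfl; exact hg2ne hk.symm
  have hhle : p g2 ≤ 3 := by
    have hbk := hbud k
    rwa [hk, hb'j k hki] at hbk
  have hph : p g2 = 3 := le_antisymm hhle h3h
  -- chain: i must not block via g2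
  by_contra hgt
  push_neg at hgt
  have hbudi : p (μ i) ≤ (5 : ℝ) := by
    have hbi := hbud i
    rwa [hb'i] at hbi
  have hnbi := hnb i g2
  rw [IsBlockingPair] at hnbi
  push_neg at hnbi
  have hutil : util vv3 b' p i (μ i) < util vv3 b' p i g2 := by
    have c1 : p (μ i) ≤ ((b' i : ℕ) : ℝ) := by rw [hb'i]; exact hbudi
    have c2 : p g2 ≤ ((b' i : ℕ) : ℝ) := by rw [hb'i, hph]; norm_num
    simp only [util]
    rw [if_pos c1, if_pos c2]
    apply WithBot.coe_lt_coe.mpr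
    have e1 : vv3 i (μ i) = 10 := if_neg hAi
    have e2 : vv3 i g2 = 10 := if_neg hg20
    rw [e1, e2, hph]
    push_cast
    linarith
  have hfin := hnbi hutil
  rw [hb'i, hph] at hfin
  linarith

/-- For the market with three bidders and goods `{A, B, 0}`
(formalized as `Good 2 = Fin 3` with `0` the dummy), there is no direct mechanism `M`
mapping each reported profile of valuations (with `v_i(0) = 0`) and positive budgets to
an outcome that is core-stable with respect to the reports, and for which truthful
reporting is optimal: for every core-selecting `M` there are a true profile, a bidder `i`
and a unilateral misreport `(v'_i, b'^i)` after which bidder `i`'s utility (evaluated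
with `i`'s true valuation and true budget) strictly exceeds the utility obtained under
truthful reporting. -/
theorem no_incentive_compatible_core_mechanism :
    ∀ M : (Fin 3 → Good 2 → ℕ) → (Fin 3 → ℕ) → (Fin 3 → Good 2) × (Good 2 → ℝ),
      (∀ (v : Fin 3 → Good 2 → ℕ) (b : Fin 3 → ℕ),
        (∀ i, v i 0 = 0) → (∀ i, 0 < b i) → IsCore v b (M v b).1 (M v b).2) →
      ∃ (v : Fin 3 → Good 2 → ℕ) (b : Fin 3 → ℕ),
        (∀ i, v i 0 = 0) ∧ (∀ i, 0 < b i) ∧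
        ∃ (i : Fin 3) (v' : Good 2 → ℕ) (b' : ℕ), v' 0 = 0 ∧ 0 < b' ∧
          util v b (M v b).2 i ((M v b).1 i) <
            util v b (M (Function.update v i v') (Function.update b i b')).2 i
              ((M (Function.update v i v') (Function.update b i b')).1 i) := by
  intro M hM
  have hv0 : ∀ i : Fin 3, vv3 i 0 = 0 := fun _ => rfl
  have hbpos : ∀ i : Fin 3, 0 < bb3 i := fun _ => by norm_num [bb3]
  refine ⟨vv3, bb3, hv0, hbpos, ?_⟩
  have hcoreT := hM vv3 bb3 hv0 hbpos
  obtain ⟨i, hi⟩ := exists_unassigned (M vv3 bb3).1 hcoreT.1.1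
  refine ⟨i, vv3 i, 5, rfl, by norm_num, ?_⟩
  rw [Function.update_eq_self]
  have hbpos' : ∀ j : Fin 3, 0 < Function.update bb3 i 5 j := by
    intro j
    by_cases hj : j = i
    · subst hj; simp
    · rw [Function.update_of_ne hj]; norm_num [bb3]
  have hcoreD := hM vv3 (Function.update bb3 i 5) hv0 hbpos'
  obtain ⟨hne, hle⟩ := key i (M vv3 (Function.update bb3 i 5)).1
    (M vv3 (Function.update bb3 i 5)).2 hcoreD
  -- the truthful utility of the unassigned bidder is 0
  have hp0T : (M vv3 bb3).2 0 = 0 := hcoreT.1.2.1.1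
  have hLHS : util vv3 bb3 (M vv3 bb3).2 i ((M vv3 bb3).1 i) = ((0 : ℝ) : WithBot ℝ) := by
    rw [hi]
    simp only [util]
    rw [if_pos]
    · rw [hp0T]
      have e0 : vv3 i 0 = 0 := rfl
      rw [e0]
      norm_num
    · rw [hp0T]
      exact Nat.cast_nonneg _
  rw [hLHS]
  -- the deviating utility is 10 - p ≥ 7 > 0
  have hcond : (M vv3 (Function.update bb3 i 5)).2 ((M vv3 (Function.update bb3 i 5)).1 i)
      ≤ ((bb3 i : ℕ) : ℝ) := by
    have e : ((bb3 i : ℕ) : ℝ) = 3 := by norm_num [bb3]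
    rw [e]; exact hle
  simp only [util]
  rw [if_pos hcond]
  apply WithBot.coe_lt_coe.mpr
  have e1 : vv3 i ((M vv3 (Function.update bb3 i 5)).1 i) = 10 := if_neg hne
  rw [e1]
  push_cast
  linarith
end

section
/- In the edge gadget with parameter m ≥ 1 (so valuations involve 2m²), consider the assignment μ matching β↔η, γ↔α', δ↔α (the solid edges), with each matched buyer paying a price equal to their budget, so that matched buyer payoffs are π_β(η) = 2m²+3, π_γ(α') = 2m²+6, π_δ(α) = 2m²+7 and matched seller payoffs are π_α(δ) = 4, π_η(β) = 1, while unmatched agents receive payoff 0. Then no blocking pair of μ involves any agent from {β, γ, δ, α, η}. -/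
namespace EdgeGadget

/-- The five buyers of the edge gadget. -/
inductive Buyer : Type
  | β | γ | δ | ε | ε'
  deriving DecidableEq

instance : Fintype Buyer where
  elems := {.β, .γ, .δ, .ε, .ε'}
  complete := by intro x; cases x <;> decide

/-- The three sellers of the edge gadget. -/
inductive Seller : Type
  | α | η | α'
  deriving DecidableEq

instance : Fintype Seller where
  elems := {.α, .η, .α'}
  complete := by intro x; cases x <;> decide

open Buyer Seller

/-- Buyer budgets. -/
def budget : Buyer → ℤ
  | .β => 9 | .γ => 7 | .δ => 9 | .ε => 8 | .ε' => 8

/-- Seller reserve values. -/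
def reserve : Seller → ℤ
  | .α => 5 | .η => 8 | .α' => 1

/-- Buyer valuations, parametrized by `m` (written `k` here). -/
def val (k : ℤ) : Buyer → Seller → ℤ
  | .β, .α => 0        | .β, .η => 2*k^2 + 12  | .β, .α' => 2*k^2 + 11
  | .γ, .α => 2*k^2 + 12 | .γ, .η => 0          | .γ, .α' => 2*k^2 + 13
  | .δ, .α => 2*k^2 + 16 | .δ, .η => 2*k^2 + 18 | .δ, .α' => 0
  | .ε, .α => 3        | .ε, .η => 0          | .ε, .α' => 0
  | .ε', .α => 0       | .ε', .η => 0         | .ε', .α' => 7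

/-- A (partial) matching of buyers to sellers: no seller gets two buyers. -/
def IsMatching (μ : Buyer → Option Seller) : Prop :=
  ∀ i i' j, μ i = some j → μ i' = some j → i = i'

/-- Payoff of buyer `i` under matching `μ`, with each matched buyer paying a price equal
to their budget: `v_i(j) - b^i` if matched to `j`, and `0` if unmatched. -/
def buyerPayoff (k : ℤ) (μ : Buyer → Option Seller) (i : Buyer) : ℤ :=
  match μ i with
  | some j => val k i j - budget i
  | none => 0

/-- Payoff of seller `j` under matching `μ`: `b^i - r_j` if matched to buyer `i`
(prices equal the matched buyer's budget), and `0` if unmatched. -/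
def sellerPayoff (μ : Buyer → Option Seller) (j : Seller) : ℤ :=
  ∑ i : Buyer, if μ i = some j then budget i - reserve j else 0

/-- `(i,j)` is a blocking pair of `μ`: `π_i(j) > π_i(μ(i))` and `π_j(i) > π_j(μ⁻¹(j))`. -/
def IsBlockingPair (k : ℤ) (μ : Buyer → Option Seller) (i : Buyer) (j : Seller) : Prop :=
  buyerPayoff k μ i < val k i j - budget i ∧
    sellerPayoff μ j < budget i - reserve j

/-- A matching is stable if it has no blocking pair. -/
def IsStable (k : ℤ) (μ : Buyer → Option Seller) : Prop :=
  IsMatching μ ∧ ∀ i j, ¬ IsBlockingPair k μ i j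

/-- The "solid" matching: `β ↔ η`, `γ ↔ α'`, `δ ↔ α`; `ε`, `ε'` unmatched. -/
def solidMatch : Buyer → Option Seller
  | .β => some .η | .γ => some .α' | .δ => some .α | .ε => none | .ε' => none

/-! Under the solid matching `α` and `η` already receive at least what any budget could pay
them, so neither can block; and the remaining seller `α'` is worth no more to `β`, `γ`, `δ`
than their current partners. -/

theorem not_isBlockingPair_of_le_sellerPayoff {k : ℤ} {μ : Buyer → Option Seller} {i : Buyer}
    {j : Seller} (h : budget i - reserve j ≤ sellerPayoff μ j) : ¬ IsBlockingPair k μ i j :=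
  fun hij => (hij.2.trans_le h).false

theorem not_isBlockingPair_of_le_buyerPayoff {k : ℤ} {μ : Buyer → Option Seller} {i : Buyer}
    {j : Seller} (h : val k i j - budget i ≤ buyerPayoff k μ i) : ¬ IsBlockingPair k μ i j :=
  fun hij => (hij.1.trans_le h).false

theorem budget_sub_reserve_le_sellerPayoff_solidMatch (i : Buyer) {j : Seller}
    (hj : j ∈ ({.α, .η} : Set Seller)) : budget i - reserve j ≤ sellerPayoff solidMatch j := by
  rcases hj with rfl | rfl <;> cases i <;> decide

theorem val_α'_sub_budget_le_buyerPayoff_solidMatch (k : ℤ) {i : Buyer}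
    (hi : i ∈ ({.β, .γ, .δ} : Set Buyer)) :
    val k i .α' - budget i ≤ buyerPayoff k solidMatch i := by
  rcases hi with rfl | rfl | rfl <;>
    simp only [buyerPayoff, solidMatch, val, budget] <;> linarith [sq_nonneg k]

theorem solid_no_blocking_pair_general (k : ℤ) :
    ∀ i j, IsBlockingPair k solidMatch i j →
      i ∉ ({.β, .γ, .δ} : Set Buyer) ∧ j ∉ ({.α, .η} : Set Seller) := by
  intro i j hij
  have hj : j ∉ ({.α, .η} : Set Seller) := fun hj =>
    not_isBlockingPair_of_le_sellerPayoff (budget_sub_reserve_le_sellerPayoff_solidMatch i hj) hij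
  cases j with
  | α | η => exact absurd (by simp) hj
  | α' => exact ⟨fun hi => not_isBlockingPair_of_le_buyerPayoff
      (val_α'_sub_budget_le_buyerPayoff_solidMatch k hi) hij, hj⟩

/-- In the edge gadget with parameter `m ≥ 1`, no blocking pair of the
solid matching (prices at the matched buyers' budgets) involves any agent from
`{β, γ, δ, α, η}`. -/
theorem solid_no_blocking_pair (k : ℤ) (hk : 1 ≤ k) :
    ∀ i j, IsBlockingPair k solidMatch i j →
      i ∉ ({.β, .γ, .δ} : Set Buyer) ∧ j ∉ ({.α, .η} : Set Seller) :=
  solid_no_blocking_pair_general k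

end EdgeGadget
end
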